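/- arXiv:2106.13477 — 8 statements merged into one kernel-verified Lean document; each statement's English description precedes it below -/
import Mathlib

section
/- Along the flow du/dt = -∇²Φ(u)⁻¹(∇f(u) + Aᵀc(u)), where c(u) is chosen so that A u(t) = b for all t, the time derivative of the Bregman divergence D_Φ(u*, u(t)) satisfies d/dt D_Φ(u*, u(t)) ≤ f(u*) - f(u(t)). -/
open scoped InnerProductSpace Matrix

/-- Bregman divergence of `Φ` with gradient map `Φ'`. -/
noncomputable def bregman {n : ℕ} (Φ : EuclideanSpace ℝ (Fin n) → ℝ)
    (Φ' : EuclideanSpace ℝ (Fin n) → EuclideanSpace ℝ (Fin n))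
    (x y : EuclideanSpace ℝ (Fin n)) : ℝ :=
  Φ x - Φ y - ⟪Φ' y, x - y⟫_ℝ

/-- Gradient inequality for convex functions. -/
lemma convex_gradient_ineq {n : ℕ} {f : EuclideanSpace ℝ (Fin n) → ℝ}
    (hf : ConvexOn ℝ Set.univ f) {x g : EuclideanSpace ℝ (Fin n)}
    (hg : HasGradientAt f g x) (y : EuclideanSpace ℝ (Fin n)) :
    f x + ⟪g, y - x⟫_ℝ ≤ f y := by
  set φ : ℝ → ℝ := fun s => f (x + s • (y - x)) with hφ
  have hφconv : ConvexOn ℝ Set.univ φ := by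
    have := hf.comp_affineMap (AffineMap.lineMap x y)
    have he : (AffineMap.lineMap x y : ℝ → EuclideanSpace ℝ (Fin n)) ⁻¹' Set.univ
        = Set.univ := Set.preimage_univ
    rw [he] at this
    convert this using 1
    iterate 4 rfl
    funext s
    simp [φ, AffineMap.lineMap_apply_module]
    ring_nf
    congr 1
    module
  have hline : HasDerivAt (fun s : ℝ => x + s • (y - x)) (y - x) 0 := by
    simpa using ((hasDerivAt_id (0:ℝ)).smul_const (y - x)).const_add x
  have hφd : HasDerivAt φ ⟪g, y - x⟫_ℝ 0 := by
    have hg' : HasFDerivAt f ((InnerProductSpace.toDual ℝ _) g) (x + (0:ℝ) • (y - x)) := by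
      simpa using hg.hasFDerivAt
    have := hg'.comp_hasDerivAt 0 hline
    exact this
  have hslope := hφconv.le_slope_of_hasDerivAt (Set.mem_univ (0:ℝ))
    (Set.mem_univ (1:ℝ)) one_pos hφd
  have : ⟪g, y - x⟫_ℝ ≤ φ 1 - φ 0 := by
    simpa [slope_def_field] using hslope
  have h0 : φ 0 = f x := by simp [φ]
  have h1 : φ 1 = f y := by simp [φ]
  rw [h0, h1] at this
  linarith

theorem bregman_deriv_le_along_flow {n m : ℕ}
    (f Φ : EuclideanSpace ℝ (Fin n) → ℝ)
    (f' Φ' : EuclideanSpace ℝ (Fin n) → EuclideanSpace ℝ (Fin n))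
    (H : EuclideanSpace ℝ (Fin n) → Matrix (Fin n) (Fin n) ℝ)
    (A : Matrix (Fin m) (Fin n) ℝ) (b : EuclideanSpace ℝ (Fin m))
    (c : EuclideanSpace ℝ (Fin n) → EuclideanSpace ℝ (Fin m))
    (u : ℝ → EuclideanSpace ℝ (Fin n)) (ustar : EuclideanSpace ℝ (Fin n))
    (hfconv : ConvexOn ℝ Set.univ f)
    (hf' : ∀ x, HasGradientAt f (f' x) x)
    (hΦ' : ∀ x, HasGradientAt Φ (Φ' x) x)
    (hΦ'' : ∀ x, HasFDerivAt Φ' (Matrix.toEuclideanCLM (𝕜 := ℝ) (H x)) x)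
    (hHpos : ∀ x, (H x).PosDef)
    (hu' : ∀ t, HasDerivAt u
      (-(Matrix.toEuclideanLin (H (u t))⁻¹
          (f' (u t) + Matrix.toEuclideanLin Aᵀ (c (u t))))) t)
    (hcon : ∀ t, Matrix.toEuclideanLin A (u t) = b)
    (hstar_feas : Matrix.toEuclideanLin A ustar = b)
    (hstar_min : ∀ v, Matrix.toEuclideanLin A v = b → f ustar ≤ f v) :
    ∀ t, 0 ≤ t →
      deriv (fun s => bregman Φ Φ' ustar (u s)) t ≤ f ustar - f (u t) := by
  intro t _
  set w : EuclideanSpace ℝ (Fin n) := f' (u t) + Matrix.toEuclideanLin Aᵀ (c (u t)) with hw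
  set v : EuclideanSpace ℝ (Fin n) := -(Matrix.toEuclideanLin (H (u t))⁻¹ w) with hv
  -- H(u t) applied to v equals -w
  have hHv : Matrix.toEuclideanCLM (𝕜 := ℝ) (H (u t)) v = -w := by
    have hmul : H (u t) * (H (u t))⁻¹ = 1 :=
      Matrix.mul_nonsing_inv _ ((hHpos (u t)).det_pos.ne'.isUnit)
    have key : ∀ z, Matrix.toEuclideanCLM (𝕜 := ℝ) (H (u t))
        (Matrix.toEuclideanCLM (𝕜 := ℝ) (H (u t))⁻¹ z) = z := by
      intro z
      have : Matrix.toEuclideanCLM (𝕜 := ℝ) (H (u t)) *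
          Matrix.toEuclideanCLM (𝕜 := ℝ) (H (u t))⁻¹ = 1 := by
        rw [← map_mul, hmul, map_one]
      calc Matrix.toEuclideanCLM (𝕜 := ℝ) (H (u t))
            (Matrix.toEuclideanCLM (𝕜 := ℝ) (H (u t))⁻¹ z)
          = (Matrix.toEuclideanCLM (𝕜 := ℝ) (H (u t)) *
              Matrix.toEuclideanCLM (𝕜 := ℝ) (H (u t))⁻¹) z := rfl
        _ = z := by rw [this]; rfl
    have hclm : ∀ (M : Matrix (Fin n) (Fin n) ℝ) (z : EuclideanSpace ℝ (Fin n)),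
        Matrix.toEuclideanCLM (𝕜 := ℝ) M z = Matrix.toEuclideanLin M z := by
      intro M z
      rw [← Matrix.coe_toEuclideanCLM_eq_toEuclideanLin]
      rfl
    rw [hv, map_neg]
    rw [← hclm] at *
    rw [key w]
  -- derivative of u at t
  have hu't : HasDerivAt u v t := by
    simpa [hv, hw] using hu' t
  clear_value w v
  -- derivative of the bregman divergence
  have d1 : HasDerivAt (fun s => Φ (u s)) ⟪Φ' (u t), v⟫_ℝ t := by
    have := (hΦ' (u t)).hasFDerivAt.comp_hasDerivAt t hu't
    exact this
  have d2 : HasDerivAt (fun s => Φ' (u s))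
      (Matrix.toEuclideanCLM (𝕜 := ℝ) (H (u t)) v) t :=
    (hΦ'' (u t)).comp_hasDerivAt t hu't
  have d3 : HasDerivAt (fun s => ustar - u s) (-v) t := hu't.const_sub ustar
  have d4 : HasDerivAt (fun s => ⟪Φ' (u s), ustar - u s⟫_ℝ)
      (⟪Φ' (u t), -v⟫_ℝ + ⟪Matrix.toEuclideanCLM (𝕜 := ℝ) (H (u t)) v, ustar - u t⟫_ℝ) t :=
    HasDerivAt.inner ℝ d2 d3
  have dtot : HasDerivAt (fun s => bregman Φ Φ' ustar (u s))
      (⟪w, ustar - u t⟫_ℝ) t := by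
    have : HasDerivAt (fun s => bregman Φ Φ' ustar (u s))
        (-⟪Φ' (u t), v⟫_ℝ -
          (⟪Φ' (u t), -v⟫_ℝ + ⟪Matrix.toEuclideanCLM (𝕜 := ℝ) (H (u t)) v, ustar - u t⟫_ℝ)) t := by
      unfold bregman
      exact (d1.const_sub (Φ ustar)).sub d4
    convert this using 1
    rw [hHv, inner_neg_right, inner_neg_left]
    ring
  rw [dtot.deriv]
  -- split the inner product
  have hAt : ⟪Matrix.toEuclideanLin Aᵀ (c (u t)), ustar - u t⟫_ℝ = 0 := by
    have hadj : Matrix.toEuclideanLin Aᵀ = LinearMap.adjoint (Matrix.toEuclideanLin A) := by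
      rw [← Matrix.toEuclideanLin_conjTranspose_eq_adjoint]
      congr 1
    rw [hadj, LinearMap.adjoint_inner_left, map_sub, hstar_feas, hcon t, sub_self,
      inner_zero_right]
  have hsplit : ⟪w, ustar - u t⟫_ℝ = ⟪f' (u t), ustar - u t⟫_ℝ := by
    rw [hw, inner_add_left, hAt, add_zero]
  rw [hsplit]
  have := convex_gradient_ineq hfconv (hf' (u t)) ustar
  linarith
end

section
/- If u(t) solves du/dt = -∇²Φ(u)⁻¹(∇f(u) + Aᵀc(u)) with u(0) = u₀ and A u(t) = b for all t, then f((1/T)∫₀ᵀ u(t) dt) - f(u*) ≤ D_Φ(u*, u₀)/T, where u* minimizes f subject to Au = b. -/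
open scoped InnerProductSpace Matrix

lemma grad_ineq {E : Type*} [NormedAddCommGroup E] [InnerProductSpace ℝ E] [CompleteSpace E]
    {f : E → ℝ} {g x : E} (hconv : ConvexOn ℝ Set.univ f)
    (hx : HasGradientAt f g x) (y : E) : f x + ⟪g, y - x⟫_ℝ ≤ f y := by
  set φ : ℝ → ℝ := fun t => f (t • (y - x) + x) with hφ
  have hφconv : ConvexOn ℝ Set.univ φ := by
    have h := hconv.comp_affineMap (AffineMap.lineMap x y)
    have : ((AffineMap.lineMap x y : ℝ →ᵃ[ℝ] E) ⁻¹' Set.univ) = Set.univ := Set.preimage_univ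
    rw [this] at h
    have h2 : φ = f ∘ AffineMap.lineMap x y := by
      funext t; simp [hφ, AffineMap.lineMap_apply]
    rw [h2]; exact h
  have h1 : HasDerivAt (fun t : ℝ => t • (y - x) + x) (y - x) 0 := by
    simpa using ((hasDerivAt_id (0 : ℝ)).smul_const (y - x)).add_const x
  have hd : HasDerivAt φ ⟪g, y - x⟫_ℝ 0 := by
    have hx' : HasFDerivAt f (InnerProductSpace.toDual ℝ E g) ((0:ℝ) • (y - x) + x) := by
      simpa using hx.hasFDerivAt
    have := hx'.comp_hasDerivAt 0 h1
    simp only [InnerProductSpace.toDual_apply_apply] at this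
    exact this
  have hslope := hφconv.le_slope_of_hasDerivAt (Set.mem_univ (0 : ℝ))
    (Set.mem_univ (1 : ℝ)) one_pos hd
  rw [slope_def_field] at hslope
  have h0 : φ 0 = f x := by simp [hφ]
  have h2 : φ 1 = f y := by simp [hφ]
  rw [h0, h2] at hslope
  simp only [sub_zero, div_one] at hslope
  linarith

theorem sublinear_convergence_continuous {n m : ℕ}
    (f Φ : EuclideanSpace ℝ (Fin n) → ℝ)
    (f' Φ' : EuclideanSpace ℝ (Fin n) → EuclideanSpace ℝ (Fin n))
    (H : EuclideanSpace ℝ (Fin n) → Matrix (Fin n) (Fin n) ℝ)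
    (A : Matrix (Fin m) (Fin n) ℝ) (b : EuclideanSpace ℝ (Fin m))
    (c : EuclideanSpace ℝ (Fin n) → EuclideanSpace ℝ (Fin m))
    (u : ℝ → EuclideanSpace ℝ (Fin n))
    (u0 ustar : EuclideanSpace ℝ (Fin n)) (T : ℝ) (hT : 0 < T)
    (hfconv : ConvexOn ℝ Set.univ f)
    (hf' : ∀ x, HasGradientAt f (f' x) x)
    (hΦstrict : StrictConvexOn ℝ Set.univ Φ)
    (hΦ' : ∀ x, HasGradientAt Φ (Φ' x) x)
    (hΦ'' : ∀ x, HasFDerivAt Φ' (Matrix.toEuclideanCLM (𝕜 := ℝ) (H x)) x)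
    (hHpos : ∀ x, (H x).PosDef)
    (hu0 : u 0 = u0)
    (hu' : ∀ t, HasDerivAt u
      (-(Matrix.toEuclideanLin (H (u t))⁻¹
          (f' (u t) + Matrix.toEuclideanLin Aᵀ (c (u t))))) t)
    (hcon : ∀ t, Matrix.toEuclideanLin A (u t) = b)
    (hstar_feas : Matrix.toEuclideanLin A ustar = b)
    (hstar_min : ∀ v, Matrix.toEuclideanLin A v = b → f ustar ≤ f v) :
    f ((1 / T) • ∫ t in (0 : ℝ)..T, u t) - f ustar ≤ bregman Φ Φ' ustar u0 / T := by
  set v : ℝ → EuclideanSpace ℝ (Fin n) := fun t =>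
    -(Matrix.toEuclideanLin (H (u t))⁻¹
        (f' (u t) + Matrix.toEuclideanLin Aᵀ (c (u t)))) with hv
  have hucont : Continuous u := continuous_iff_continuousAt.2 fun t => (hu' t).continuousAt
  have hfcont : Continuous f := continuous_iff_continuousAt.2 fun x =>
    (hf' x).hasFDerivAt.differentiableAt.continuousAt
  have hfu : Continuous fun s => f (u s) - f ustar := (hfcont.comp hucont).sub continuous_const
  -- inverse of H
  have hinv : ∀ x, H x * (H x)⁻¹ = 1 := fun x =>
    Matrix.mul_nonsing_inv _ (isUnit_iff_ne_zero.2 (hHpos x).det_pos.ne')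
  have key : ∀ (x : EuclideanSpace ℝ (Fin n)) (w : EuclideanSpace ℝ (Fin n)),
      Matrix.toEuclideanCLM (𝕜 := ℝ) (H x) (Matrix.toEuclideanLin (H x)⁻¹ w) = w := by
    intro x w
    have h1 : Matrix.toEuclideanLin (H x)⁻¹ w = Matrix.toEuclideanCLM (𝕜 := ℝ) (H x)⁻¹ w := by
      rw [← Matrix.coe_toEuclideanCLM_eq_toEuclideanLin]; rfl
    rw [h1, ← ContinuousLinearMap.mul_apply, ← map_mul, hinv, map_one,
      ContinuousLinearMap.one_apply]
  -- adjoint fact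
  have hAT : ∀ (cv : EuclideanSpace ℝ (Fin m)) (d : EuclideanSpace ℝ (Fin n)),
      ⟪Matrix.toEuclideanLin Aᵀ cv, d⟫_ℝ = ⟪cv, Matrix.toEuclideanLin A d⟫_ℝ := by
    intro cv d
    have hAH : Aᴴ = Aᵀ := by ext i j; simp [Matrix.conjTranspose_apply]
    rw [← hAH, Matrix.toEuclideanLin_conjTranspose_eq_adjoint, LinearMap.adjoint_inner_left]
  -- derivative of Bregman part
  have hB : ∀ t, HasDerivAt (fun t => bregman Φ Φ' ustar (u t))
      (⟪f' (u t), ustar - u t⟫_ℝ) t := by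
    intro t
    have hΦu : HasDerivAt (fun t => Φ (u t)) (⟪Φ' (u t), v t⟫_ℝ) t := by
      have h := (hΦ' (u t)).hasFDerivAt.comp_hasDerivAt t (hu' t)
      have heq : ((InnerProductSpace.toDual ℝ (EuclideanSpace ℝ (Fin n))) (Φ' (u t))) (v t)
          = ⟪Φ' (u t), v t⟫_ℝ := InnerProductSpace.toDual_apply_apply
      rw [← heq]
      exact h
    have hΦ'u : HasDerivAt (fun t => Φ' (u t))
        (Matrix.toEuclideanCLM (𝕜 := ℝ) (H (u t)) (v t)) t :=
      (hΦ'' (u t)).comp_hasDerivAt t (hu' t)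
    have hsub : HasDerivAt (fun t => ustar - u t) (-(v t)) t := (hu' t).const_sub ustar
    have hin := hΦ'u.inner ℝ hsub
    have hD := (hΦu.const_sub (Φ ustar)).sub hin
    have hval : Φ ustar - Φ (u t) - ⟪Φ' (u t), ustar - u t⟫_ℝ
        = bregman Φ Φ' ustar (u t) := rfl
    have hkey : Matrix.toEuclideanCLM (𝕜 := ℝ) (H (u t)) (v t)
        = -(f' (u t) + Matrix.toEuclideanLin Aᵀ (c (u t))) := by
      rw [hv]; simp only [map_neg]; rw [key]
    have hzero : ⟪Matrix.toEuclideanLin Aᵀ (c (u t)), ustar - u t⟫_ℝ = 0 := by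
      rw [hAT, map_sub, hstar_feas, hcon, sub_self, inner_zero_right]
    refine HasDerivAt.congr_deriv hD ?_
    rw [hkey]
    simp only [inner_neg_right, inner_neg_left, inner_add_left, hzero]
    ring
  -- derivative of integral part
  have hI : ∀ t, HasDerivAt (fun t => ∫ s in (0:ℝ)..t, (f (u s) - f ustar))
      (f (u t) - f ustar) t := by
    intro t
    exact intervalIntegral.integral_hasDerivAt_right (hfu.intervalIntegrable 0 t)
      ⟨Set.univ, Filter.univ_mem, hfu.aestronglyMeasurable.restrict⟩ hfu.continuousAt
  set E : ℝ → ℝ := fun t =>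
    bregman Φ Φ' ustar (u t) + ∫ s in (0:ℝ)..t, (f (u s) - f ustar) with hE
  have hEderiv : ∀ t, HasDerivAt E
      (⟪f' (u t), ustar - u t⟫_ℝ + (f (u t) - f ustar)) t := fun t => (hB t).add (hI t)
  have hEnonpos : ∀ t, ⟪f' (u t), ustar - u t⟫_ℝ + (f (u t) - f ustar) ≤ 0 := by
    intro t
    have := grad_ineq hfconv (hf' (u t)) ustar
    linarith
  have hanti : Antitone E := antitone_of_hasDerivAt_nonpos hEderiv hEnonpos
  have hE0 : E 0 = bregman Φ Φ' ustar u0 := by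
    simp [hE, hu0]
  have hET : E T ≤ bregman Φ Φ' ustar u0 := by
    have h := hanti hT.le
    rwa [hE0] at h
  have hDT : 0 ≤ bregman Φ Φ' ustar (u T) := by
    have := grad_ineq hΦstrict.convexOn (hΦ' (u T)) ustar
    simp only [bregman]
    linarith
  have hint : ∫ s in (0:ℝ)..T, (f (u s) - f ustar) ≤ bregman Φ Φ' ustar u0 := by
    have h : bregman Φ Φ' ustar (u T) + ∫ s in (0:ℝ)..T, (f (u s) - f ustar)
        ≤ bregman Φ Φ' ustar u0 := hET
    linarith
  -- Jensen step
  set w : EuclideanSpace ℝ (Fin n) := (1 / T) • ∫ t in (0:ℝ)..T, u t with hw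
  have hTw : (∫ t in (0:ℝ)..T, u t) = T • w := by
    rw [hw, smul_smul, mul_one_div, div_self hT.ne', one_smul]
  have hpt : ∀ s, f w - f ustar ≤ (f (u s) - f ustar) - ⟪f' w, u s⟫_ℝ + ⟪f' w, w⟫_ℝ := by
    intro s
    have h := grad_ineq hfconv (hf' w) (u s)
    rw [inner_sub_right] at h
    linarith
  have hgc : Continuous fun s => (f (u s) - f ustar) - ⟪f' w, u s⟫_ℝ + ⟪f' w, w⟫_ℝ :=
    (hfu.sub (continuous_const.inner hucont)).add continuous_const
  have hmono := intervalIntegral.integral_mono_on (μ := MeasureTheory.volume) (f := fun _ : ℝ => f w - f ustar)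
    hT.le (intervalIntegrable_const (μ := MeasureTheory.volume)) (hgc.intervalIntegrable 0 T) (fun s _ => hpt s)
  have hinner : (∫ s in (0:ℝ)..T, ⟪f' w, u s⟫_ℝ) = ⟪f' w, ∫ s in (0:ℝ)..T, u s⟫_ℝ := by
    have := ContinuousLinearMap.intervalIntegral_comp_comm (μ := MeasureTheory.volume)
      (innerSL ℝ (f' w)) (hucont.intervalIntegrable 0 T)
    simpa using this
  have hsplit : (∫ s in (0:ℝ)..T, ((f (u s) - f ustar) - ⟪f' w, u s⟫_ℝ + ⟪f' w, w⟫_ℝ))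
      = (∫ s in (0:ℝ)..T, (f (u s) - f ustar)) - (∫ s in (0:ℝ)..T, ⟪f' w, u s⟫_ℝ)
        + (T - 0) * ⟪f' w, w⟫_ℝ := by
    rw [intervalIntegral.integral_add ((hfu.intervalIntegrable 0 T).sub
        ((continuous_const.inner hucont).intervalIntegrable 0 T))
        (intervalIntegrable_const (μ := MeasureTheory.volume)),
      intervalIntegral.integral_sub (hfu.intervalIntegrable 0 T)
        ((continuous_const.inner hucont).intervalIntegrable 0 T),
      intervalIntegral.integral_const, smul_eq_mul]
  have hcancel : (∫ s in (0:ℝ)..T, ⟪f' w, u s⟫_ℝ) = T * ⟪f' w, w⟫_ℝ := by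
    rw [hinner, hTw, inner_smul_right]
  rw [intervalIntegral.integral_const, smul_eq_mul, hsplit, hcancel] at hmono
  have hfinal : T * (f w - f ustar) ≤ bregman Φ Φ' ustar u0 := by
    have h2 : (T - 0) * (f w - f ustar)
        ≤ ∫ s in (0:ℝ)..T, (f (u s) - f ustar) := by linarith
    linarith [hint]
  rw [le_div_iff₀ hT]
  linarith
end

section
/- Suppose u(t) solves du/dt = -∇²Φ(u)⁻¹(∇f(u) + Aᵀc(u)) with Au(t) = Au* = b for all t, and suppose the Bregman divergences satisfy D_f(u*, u(t)) ≥ μ D_Φ(u*, u(t)) for all t with μ > 0. Then D_Φ(u*, u(t)) ≤ D_Φ(u*, u(0)) e^{-μ t} for all t ≥ 0. -/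
open scoped InnerProductSpace Matrix
open Filter Topology

/-- First-order condition for convex differentiable functions. -/
lemma convex_grad_ineq {n : ℕ} {f : EuclideanSpace ℝ (Fin n) → ℝ}
    (hf : ConvexOn ℝ Set.univ f) {x y g : EuclideanSpace ℝ (Fin n)}
    (hg : HasGradientAt f g x) : f x + ⟪g, y - x⟫_ℝ ≤ f y := by
  set φ : ℝ → ℝ := fun s => f (x + s • (y - x)) with hφ
  have hcurve : HasDerivAt (fun s : ℝ => x + s • (y - x)) (y - x) 0 := by
    simpa using ((hasDerivAt_id (0:ℝ)).smul_const (y - x)).const_add x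
  have hgx : HasFDerivAt f ((InnerProductSpace.toDual ℝ _) g) (x + (0:ℝ) • (y - x)) := by
    simpa using hg.hasFDerivAt
  have hd : HasDerivAt φ (⟪g, y - x⟫_ℝ) 0 := by
    simpa [Function.comp_def] using hgx.comp_hasDerivAt 0 hcurve
  have hdw := hd.hasDerivWithinAt (s := Set.Ioi (0:ℝ))
  rw [hasDerivWithinAt_iff_tendsto_slope,
    Set.diff_singleton_eq_self (by simp : (0:ℝ) ∉ Set.Ioi (0:ℝ))] at hdw
  have hev : ∀ᶠ s in 𝓝[>] (0:ℝ), slope φ 0 s ≤ f y - f x := by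
    have h1 : ∀ᶠ s in 𝓝[>] (0:ℝ), s < 1 :=
      (eventually_lt_nhds (by norm_num : (0:ℝ) < 1)).filter_mono nhdsWithin_le_nhds
    filter_upwards [self_mem_nhdsWithin, h1] with s hs0 hs1
    rw [Set.mem_Ioi] at hs0
    have hconv := hf.2 (Set.mem_univ x) (Set.mem_univ y)
      (show (0:ℝ) ≤ 1 - s by linarith) hs0.le (by ring)
    have hxy : x + s • (y - x) = (1 - s) • x + s • y := by module
    have hφs : φ s ≤ (1 - s) * f x + s * f y := by
      rw [hφ]; simp only [hxy]; simpa [smul_eq_mul] using hconv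
    have hφ0 : φ 0 = f x := by simp [hφ]
    rw [slope_def_field, div_le_iff₀ (by linarith : (0:ℝ) < s - 0)]
    nlinarith
  have := le_of_tendsto hdw hev
  linarith

theorem linear_convergence_continuous {n m : ℕ}
    (f Φ : EuclideanSpace ℝ (Fin n) → ℝ)
    (f' Φ' : EuclideanSpace ℝ (Fin n) → EuclideanSpace ℝ (Fin n))
    (H : EuclideanSpace ℝ (Fin n) → Matrix (Fin n) (Fin n) ℝ)
    (A : Matrix (Fin m) (Fin n) ℝ) (b : EuclideanSpace ℝ (Fin m))
    (c : EuclideanSpace ℝ (Fin n) → EuclideanSpace ℝ (Fin m))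
    (u : ℝ → EuclideanSpace ℝ (Fin n)) (ustar : EuclideanSpace ℝ (Fin n))
    (μ : ℝ) (hμ : 0 < μ)
    (hfconv : ConvexOn ℝ Set.univ f)
    (hf' : ∀ x, HasGradientAt f (f' x) x)
    (hΦstrict : StrictConvexOn ℝ Set.univ Φ)
    (hΦ' : ∀ x, HasGradientAt Φ (Φ' x) x)
    (hΦ'' : ∀ x, HasFDerivAt Φ' (Matrix.toEuclideanCLM (𝕜 := ℝ) (H x)) x)
    (hHpos : ∀ x, (H x).PosDef)
    (hu' : ∀ t, HasDerivAt u
      (-(Matrix.toEuclideanLin (H (u t))⁻¹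
          (f' (u t) + Matrix.toEuclideanLin Aᵀ (c (u t))))) t)
    (hcon : ∀ t, Matrix.toEuclideanLin A (u t) = Matrix.toEuclideanLin A ustar)
    (hbcon : ∀ t, Matrix.toEuclideanLin A (u t) = b)
    (hstar_feas : Matrix.toEuclideanLin A ustar = b)
    (hstar_min : ∀ v, Matrix.toEuclideanLin A v = b → f ustar ≤ f v)
    (hrel : ∀ t, bregman f f' ustar (u t) ≥ μ * bregman Φ Φ' ustar (u t)) :
    ∀ t, 0 ≤ t →
      bregman Φ Φ' ustar (u t) ≤ bregman Φ Φ' ustar (u 0) * Real.exp (-μ * t) := by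
  set g : ℝ → ℝ := fun t => bregman Φ Φ' ustar (u t) with hgdef
  set v : ℝ → EuclideanSpace ℝ (Fin n) := fun t =>
    -(Matrix.toEuclideanLin (H (u t))⁻¹
        (f' (u t) + Matrix.toEuclideanLin Aᵀ (c (u t)))) with hvdef
  -- H(u t) applied to v t equals -(f' + Aᵀ c)
  have hHv : ∀ t, (Matrix.toEuclideanCLM (𝕜 := ℝ) (H (u t))) (v t)
      = -(f' (u t) + Matrix.toEuclideanLin Aᵀ (c (u t))) := by
    intro t
    have hdet : IsUnit (H (u t)).det := by
      simpa [isUnit_iff_ne_zero] using (hHpos (u t)).det_pos.ne'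
    have hcoe : ∀ (M : Matrix (Fin n) (Fin n) ℝ) (w : EuclideanSpace ℝ (Fin n)),
        Matrix.toEuclideanLin M w = (Matrix.toEuclideanCLM (𝕜 := ℝ) M) w := by
      intro M w
      rw [← Matrix.coe_toEuclideanCLM_eq_toEuclideanLin]
      rfl
    rw [hvdef]
    simp only [map_neg, hcoe]
    rw [← ContinuousLinearMap.comp_apply, ← ContinuousLinearMap.mul_def, ← map_mul,
      Matrix.mul_nonsing_inv _ hdet, map_one, ContinuousLinearMap.one_apply]
  -- derivative of g
  have hg : ∀ t, HasDerivAt g (⟪f' (u t), ustar - u t⟫_ℝ) t := by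
    intro t
    have h1 : HasDerivAt (fun t => Φ (u t)) (⟪Φ' (u t), v t⟫_ℝ) t := by
      have hfd : HasFDerivAt Φ ((InnerProductSpace.toDual ℝ _) (Φ' (u t))) (u t) :=
        (hΦ' (u t)).hasFDerivAt
      have := hfd.comp_hasDerivAt t (hu' t)
      simpa [hvdef, Function.comp_def] using this
    have h2 : HasDerivAt (fun t => Φ' (u t))
        ((Matrix.toEuclideanCLM (𝕜 := ℝ) (H (u t))) (v t)) t :=
      (hΦ'' (u t)).comp_hasDerivAt t (hu' t)
    have h3 : HasDerivAt (fun s => ustar - u s) (0 - v t) t :=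
      (hasDerivAt_const t ustar).sub (hu' t)
    rw [zero_sub] at h3
    have h4 := (HasDerivAt.inner ℝ h2 h3)
    have h5 : HasDerivAt g
        (-(⟪Φ' (u t), v t⟫_ℝ) -
          (⟪Φ' (u t), -(v t)⟫_ℝ +
            ⟪(Matrix.toEuclideanCLM (𝕜 := ℝ) (H (u t))) (v t), ustar - u t⟫_ℝ)) t := by
      have h5' := ((hasDerivAt_const t (Φ ustar)).sub h1).sub h4
      rw [zero_sub] at h5'
      exact h5'
    have hAort : ⟪Matrix.toEuclideanLin Aᵀ (c (u t)), ustar - u t⟫_ℝ = 0 := by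
      have hAconj : (Aᵀ : Matrix (Fin n) (Fin m) ℝ) = Aᴴ :=
        (Matrix.conjTranspose_eq_transpose_of_trivial A).symm
      rw [hAconj, Matrix.toEuclideanLin_conjTranspose_eq_adjoint,
        LinearMap.adjoint_inner_left]
      have hz : Matrix.toEuclideanLin A (ustar - u t) = 0 := by
        rw [map_sub, hcon t, sub_self]
      rw [hz, inner_zero_right]
    have heq : -(⟪Φ' (u t), v t⟫_ℝ) -
          (⟪Φ' (u t), -(v t)⟫_ℝ +
            ⟪(Matrix.toEuclideanCLM (𝕜 := ℝ) (H (u t))) (v t), ustar - u t⟫_ℝ)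
        = ⟪f' (u t), ustar - u t⟫_ℝ := by
      rw [hHv t]
      simp only [inner_neg_left, inner_neg_right, inner_add_left]
      rw [hAort]
      ring
    rwa [heq] at h5
  -- derivative bound
  have hbound : ∀ t, ⟪f' (u t), ustar - u t⟫_ℝ ≤ -μ * g t := by
    intro t
    have h1 : f (u t) + ⟪f' (u t), ustar - u t⟫_ℝ ≤ f ustar :=
      convex_grad_ineq hfconv (hf' (u t))
    have h2 : f ustar ≤ f (u t) := hstar_min (u t) (hbcon t)
    have h3 : bregman f f' ustar (u t)
        = f ustar - f (u t) - ⟪f' (u t), ustar - u t⟫_ℝ := rfl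
    have h4 := hrel t
    show ⟪f' (u t), ustar - u t⟫_ℝ ≤ -μ * bregman Φ Φ' ustar (u t)
    linarith
  -- Lyapunov function h
  set h : ℝ → ℝ := fun t => g t * Real.exp (μ * t) with hhdef
  have hh : ∀ t, HasDerivAt h
      ((⟪f' (u t), ustar - u t⟫_ℝ + μ * g t) * Real.exp (μ * t)) t := by
    intro t
    have he : HasDerivAt (fun t => Real.exp (μ * t)) (Real.exp (μ * t) * μ) t := by
      simpa [Function.comp_def] using (Real.hasDerivAt_exp (μ * t)).comp t
        ((hasDerivAt_id t).const_mul μ)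
    have : HasDerivAt (fun s => g s * Real.exp (μ * s)) _ t := (hg t).mul he
    convert this using 1
    ring
  have hanti : Antitone h := by
    refine antitone_of_deriv_nonpos (fun t => (hh t).differentiableAt) (fun t => ?_)
    rw [(hh t).deriv]
    have := hbound t
    have hexp := (Real.exp_pos (μ * t)).le
    nlinarith
  intro t ht
  have hle : h t ≤ h 0 := hanti ht
  rw [hhdef] at hle
  simp only [mul_zero, Real.exp_zero, mul_one] at hle
  have hexp : (0:ℝ) < Real.exp (-μ * t) := Real.exp_pos _
  have key : g t * Real.exp (μ * t) * Real.exp (-μ * t) ≤ g 0 * Real.exp (-μ * t) :=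
    mul_le_mul_of_nonneg_right hle hexp.le
  have hone : Real.exp (μ * t) * Real.exp (-μ * t) = 1 := by
    rw [← Real.exp_add]; ring_nf; exact Real.exp_zero
  calc g t = g t * (Real.exp (μ * t) * Real.exp (-μ * t)) := by rw [hone]; ring
    _ ≤ g 0 * Real.exp (-μ * t) := by rw [← mul_assoc]; exact key
end

section
/- (Per-step estimate for mirror descent) Under the hypotheses of the global convergence theorem for mirror descent, each iterate satisfies f(u^k) - f(u*) ≤ (1/η)[D_Φ(u*, u^k) - D_Φ(u*, u^{k+1})] + (η/2)‖∇f(u^k) + Aᵀc(u^k)‖_{ω,*}². -/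
open scoped InnerProductSpace Matrix

-- gradient convexity inequality
theorem grad_ineq_s7 {n : ℕ} {f : EuclideanSpace ℝ (Fin n) → ℝ}
    (hf : ConvexOn ℝ Set.univ f) {g x : EuclideanSpace ℝ (Fin n)}
    (hg : HasGradientAt f g x) (y : EuclideanSpace ℝ (Fin n)) :
    f x + ⟪g, y - x⟫_ℝ ≤ f y := by
  set d := y - x with hd
  have hc : HasDerivAt (fun t : ℝ => x + t • d) d 0 := by
    simpa using ((hasDerivAt_id (0:ℝ)).smul_const d).const_add x
  have hφ : HasDerivAt (fun t : ℝ => f (x + t • d)) ⟪g, d⟫_ℝ 0 := by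
    have h1 : HasFDerivAt f (InnerProductSpace.toDual ℝ _ g) (x + (0:ℝ) • d) := by
      simpa using hg.hasFDerivAt
    have h2 := h1.comp_hasDerivAt 0 hc; simp at h2; exact h2
  have key : ∀ t ∈ Set.Ioc (0:ℝ) 1, (f (x + t • d) - f x) / t ≤ f y - f x := by
    intro t ht
    have h01 : (0:ℝ) ≤ 1 - t := by linarith [ht.2]
    have := hf.2 (Set.mem_univ x) (Set.mem_univ y) h01 (le_of_lt ht.1) (by ring)
    have hxy : (1 - t) • x + t • y = x + t • d := by
      simp only [hd, smul_sub]; module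
    rw [hxy] at this
    rw [smul_eq_mul, smul_eq_mul] at this
    rw [div_le_iff₀ ht.1]
    nlinarith [this]
  have hslope : Filter.Tendsto (fun t : ℝ => (f (x + t • d) - f x) / t)
      (nhdsWithin 0 (Set.Ioi 0)) (nhds ⟪g, d⟫_ℝ) := by
    have := hφ.hasDerivWithinAt (s := Set.Ioi (0:ℝ))
    have h2 := (hasDerivWithinAt_iff_tendsto_slope.mp this)
    have h3 : (Set.Ioi (0:ℝ)) \ {0} = Set.Ioi 0 := by
      ext t; simp (config := {contextual := true}) [ne_of_gt]
    rw [h3] at h2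
    refine h2.congr fun t => ?_
    simp [slope, div_eq_inv_mul]
  have hle : ⟪g, d⟫_ℝ ≤ f y - f x := le_of_tendsto hslope (by
    filter_upwards [Ioc_mem_nhdsGT_of_mem (by norm_num : (0:ℝ) ∈ Set.Ico (0:ℝ) 1)] using key)
  linarith
open scoped InnerProductSpace

theorem dual_bound {n : ℕ} (hn : 0 < n) (w : EuclideanSpace ℝ (Fin n) → ℝ)
    (hw_nonneg : ∀ x, 0 ≤ w x)
    (hw_homog : ∀ (a : ℝ) x, w (a • x) = |a| * w x)
    (hw_tri : ∀ x y, w (x + y) ≤ w x + w y)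
    (hw_def : ∀ x, w x = 0 → x = 0)
    (g x : EuclideanSpace ℝ (Fin n)) :
    ⟪g, x⟫_ℝ ≤ sSup {r : ℝ | ∃ z, w z ≤ 1 ∧ r = ⟪g, z⟫_ℝ} * w x := by
  haveI : Nonempty (Fin n) := ⟨⟨0, hn⟩⟩
  haveI : Nontrivial (EuclideanSpace ℝ (Fin n)) := by
    refine ⟨EuclideanSpace.single ⟨0, hn⟩ 1, 0, ?_⟩
    intro h
    simpa using congrArg (fun v : EuclideanSpace ℝ (Fin n) => v ⟨0, hn⟩) h
  set C : ℝ := ∑ i : Fin n, w (EuclideanSpace.single i 1) with hCdef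
  -- upper bound w z ≤ C ‖z‖
  have hub : ∀ z : EuclideanSpace ℝ (Fin n), w z ≤ C * ‖z‖ := by
    intro z
    have hz : z = ∑ i : Fin n, z i • EuclideanSpace.single i 1 := by
      conv_lhs => rw [← (EuclideanSpace.basisFun (Fin n) ℝ).sum_repr z]
      simp [EuclideanSpace.basisFun_apply, EuclideanSpace.basisFun_repr]
    calc w z = w (∑ i : Fin n, z i • EuclideanSpace.single i 1) := by rw [← hz]
      _ ≤ ∑ i : Fin n, w (z i • EuclideanSpace.single i 1) := by
          refine Finset.le_sum_of_subadditive w ?_ hw_tri _ _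
          have := hw_homog 0 0; exact (by simpa using this : w 0 = 0).le
      _ = ∑ i : Fin n, |z i| * w (EuclideanSpace.single i 1) := by
          simp [hw_homog]
      _ ≤ ∑ i : Fin n, ‖z‖ * w (EuclideanSpace.single i 1) := by
          refine Finset.sum_le_sum fun i _ => ?_
          refine mul_le_mul_of_nonneg_right ?_ (hw_nonneg _)
          have h := abs_real_inner_le_norm (EuclideanSpace.single i (1:ℝ)) z
          simpa [EuclideanSpace.inner_single_left, EuclideanSpace.norm_single] using h
      _ = C * ‖z‖ := by rw [← Finset.mul_sum, mul_comm]
  -- continuity of w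
  have hwcont : Continuous w := by
    have hC0 : 0 ≤ C := Finset.sum_nonneg fun i _ => hw_nonneg _
    refine (LipschitzWith.of_dist_le_mul (K := C.toNNReal) (f := w) ?_).continuous
    intro a b
    rw [Real.dist_eq, Real.coe_toNNReal _ hC0, dist_eq_norm]
    have h1 : w a - w b ≤ w (a - b) := by
      have := hw_tri (a - b) b; simp at this; linarith
    have h2 : w b - w a ≤ w (a - b) := by
      have := hw_tri (b - a) a
      have hsymm : w (b - a) = w (a - b) := by
        rw [show b - a = (-1 : ℝ) • (a - b) by module, hw_homog]; norm_num
      simp [hsymm] at this; linarith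
    have := hub (a - b)
    rw [abs_sub_le_iff]; constructor <;> linarith
  -- minimum on the sphere
  obtain ⟨x0, hx0s, hx0min⟩ := (isCompact_sphere (0 : EuclideanSpace ℝ (Fin n)) 1).exists_isMinOn
    (NormedSpace.sphere_nonempty.mpr zero_le_one) hwcont.continuousOn
  set c : ℝ := w x0 with hc
  have hx0norm : ‖x0‖ = 1 := by simpa using mem_sphere_zero_iff_norm.mp hx0s
  have hcpos : 0 < c := by
    rcases lt_or_eq_of_le (hw_nonneg x0) with h | h
    · exact h
    · exfalso
      have := hw_def x0 h.symm
      rw [this] at hx0norm; simp at hx0norm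
  have hlb : ∀ z : EuclideanSpace ℝ (Fin n), c * ‖z‖ ≤ w z := by
    intro z
    rcases eq_or_ne z 0 with rfl | hz
    · have h0 : w 0 = 0 := by have := hw_homog 0 0; simpa using this
      simp [h0]
    · have hzn : (0:ℝ) < ‖z‖ := norm_pos_iff.mpr hz
      have hmem : ‖z‖⁻¹ • z ∈ Metric.sphere (0 : EuclideanSpace ℝ (Fin n)) 1 := by
        simp [norm_smul, abs_of_pos (inv_pos.mpr hzn), inv_mul_cancel₀ (ne_of_gt hzn)]
      have := hx0min hmem
      rw [Set.mem_setOf_eq] at this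
      have h2 : w (‖z‖⁻¹ • z) = ‖z‖⁻¹ * w z := by
        rw [hw_homog, abs_of_pos (inv_pos.mpr hzn)]
      rw [h2] at this
      calc c * ‖z‖ ≤ (‖z‖⁻¹ * w z) * ‖z‖ := by
            exact mul_le_mul_of_nonneg_right this (le_of_lt hzn)
        _ = w z := by field_simp
  -- BddAbove
  have hbdd : BddAbove {r : ℝ | ∃ z, w z ≤ 1 ∧ r = ⟪g, z⟫_ℝ} := by
    refine ⟨‖g‖ * c⁻¹, ?_⟩
    rintro r ⟨z, hz1, rfl⟩
    have hzn : ‖z‖ ≤ c⁻¹ := by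
      have := hlb z
      rw [← le_div_iff₀' hcpos] at this
      calc ‖z‖ ≤ w z / c := this
        _ ≤ 1 / c := by gcongr
        _ = c⁻¹ := one_div c
    calc ⟪g, z⟫_ℝ ≤ ‖g‖ * ‖z‖ := real_inner_le_norm g z
      _ ≤ ‖g‖ * c⁻¹ := mul_le_mul_of_nonneg_left hzn (norm_nonneg g)
  -- conclusion
  rcases lt_or_eq_of_le (hw_nonneg x) with hwx | hwx
  · have hmem : ⟪g, (w x)⁻¹ • x⟫_ℝ ∈ {r : ℝ | ∃ z, w z ≤ 1 ∧ r = ⟪g, z⟫_ℝ} := by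
      refine ⟨(w x)⁻¹ • x, ?_, rfl⟩
      rw [hw_homog, abs_of_pos (inv_pos.mpr hwx), inv_mul_cancel₀ (ne_of_gt hwx)]
    have hle := le_csSup hbdd hmem
    rw [real_inner_smul_right] at hle
    calc ⟪g, x⟫_ℝ = ((w x)⁻¹ * ⟪g, x⟫_ℝ) * w x := by field_simp
      _ ≤ sSup {r : ℝ | ∃ z, w z ≤ 1 ∧ r = ⟪g, z⟫_ℝ} * w x :=
          mul_le_mul_of_nonneg_right hle (le_of_lt hwx)
  · have hx0 : x = 0 := hw_def x hwx.symm
    have h0 : w (0 : EuclideanSpace ℝ (Fin n)) = 0 := by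
      have := hw_homog 0 0; simpa using this
    simp [hx0, h0]

theorem mirror_descent_per_step {n m : ℕ}
    (f Φ : EuclideanSpace ℝ (Fin n) → ℝ)
    (f' Φ' : EuclideanSpace ℝ (Fin n) → EuclideanSpace ℝ (Fin n))
    (w ws : EuclideanSpace ℝ (Fin n) → ℝ)
    (hw_nonneg : ∀ x, 0 ≤ w x)
    (hw_homog : ∀ (a : ℝ) x, w (a • x) = |a| * w x)
    (hw_tri : ∀ x y, w (x + y) ≤ w x + w y)
    (hw_def : ∀ x, w x = 0 → x = 0)
    (hdual : ∀ g, ws g = sSup {r : ℝ | ∃ x, w x ≤ 1 ∧ r = ⟪g, x⟫_ℝ})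
    (A : Matrix (Fin m) (Fin n) ℝ) (b : EuclideanSpace ℝ (Fin m))
    (ck : EuclideanSpace ℝ (Fin m))
    (uk uk1 ustar : EuclideanSpace ℝ (Fin n))
    (η : ℝ) (hη : 0 < η)
    (hfconv : ConvexOn ℝ Set.univ f)
    (hf' : ∀ x, HasGradientAt f (f' x) x)
    (hΦ' : ∀ x, HasGradientAt Φ (Φ' x) x)
    (hsc : ∀ x y, bregman Φ Φ' x y ≥ w (x - y) ^ 2 / 2)
    (hupdate : Φ' uk1 = Φ' uk - η • (f' uk + Matrix.toEuclideanLin Aᵀ ck))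
    (hk : Matrix.toEuclideanLin A uk = b)
    (hk1 : Matrix.toEuclideanLin A uk1 = b)
    (hstar_feas : Matrix.toEuclideanLin A ustar = b)
    (hstar_min : ∀ v, Matrix.toEuclideanLin A v = b → f ustar ≤ f v) :
    f uk - f ustar ≤
      (1 / η) * (bregman Φ Φ' ustar uk - bregman Φ Φ' ustar uk1)
        + η / 2 * ws (f' uk + Matrix.toEuclideanLin Aᵀ ck) ^ 2 := by
  set g : EuclideanSpace ℝ (Fin n) := f' uk + Matrix.toEuclideanLin Aᵀ ck with hg
  rcases Nat.eq_zero_or_pos n with hn | hn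
  · subst hn
    have h1 : uk = ustar := Subsingleton.elim _ _
    have h2 : uk1 = uk := Subsingleton.elim _ _
    rw [h2, h1]
    have : (0:ℝ) ≤ η / 2 * ws g ^ 2 := by positivity
    simpa using this
  -- orthogonality
  have horth : ⟪Matrix.toEuclideanLin Aᵀ ck, uk - ustar⟫_ℝ = 0 := by
    have hT : Aᵀ = Aᴴ := by
      ext i j; simp [Matrix.conjTranspose_apply]
    rw [hT, Matrix.toEuclideanLin_conjTranspose_eq_adjoint,
      LinearMap.adjoint_inner_left, map_sub, hk, hstar_feas, sub_self, inner_zero_right]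
  -- convexity
  have hconv : f uk - f ustar ≤ ⟪g, uk - ustar⟫_ℝ := by
    have h := grad_ineq_s7 hfconv (hf' uk) ustar
    have h2 : ⟪f' uk, ustar - uk⟫_ℝ = -⟪f' uk, uk - ustar⟫_ℝ := by
      rw [← inner_neg_right]; congr 1; abel
    have h3 : ⟪g, uk - ustar⟫_ℝ = ⟪f' uk, uk - ustar⟫_ℝ := by
      rw [hg, inner_add_left, horth, add_zero]
    linarith [h, h2 ▸ h, h3]
  have hsplit : ⟪g, uk - ustar⟫_ℝ = ⟪g, uk - uk1⟫_ℝ + ⟪g, uk1 - ustar⟫_ℝ := by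
    rw [← inner_add_right]; congr 1; abel
  -- three point identity
  have hiden : bregman Φ Φ' ustar uk - bregman Φ Φ' ustar uk1 - bregman Φ Φ' uk1 uk
      = ⟪Φ' uk1 - Φ' uk, ustar - uk1⟫_ℝ := by
    simp only [bregman, inner_sub_left, inner_sub_right]
    ring
  have hupd : ⟪Φ' uk1 - Φ' uk, ustar - uk1⟫_ℝ = η * ⟪g, uk1 - ustar⟫_ℝ := by
    rw [hupdate]
    have : Φ' uk - η • g - Φ' uk = (-η) • g := by module
    rw [this, real_inner_smul_left]
    have : ⟪g, ustar - uk1⟫_ℝ = -⟪g, uk1 - ustar⟫_ℝ := by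
      rw [← inner_neg_right]; congr 1; abel
    rw [this]; ring
  -- Fenchel and AM-GM
  have hF : ⟪g, uk - uk1⟫_ℝ ≤ ws g * w (uk - uk1) := by
    rw [hdual]
    exact dual_bound hn w hw_nonneg hw_homog hw_tri hw_def g (uk - uk1)
  have hAM : ws g * w (uk - uk1) ≤ η / 2 * ws g ^ 2 + 1 / (2 * η) * w (uk - uk1) ^ 2 := by
    have h := sq_nonneg (η * ws g - w (uk - uk1))
    have heq : η / 2 * ws g ^ 2 + 1 / (2 * η) * w (uk - uk1) ^ 2 - ws g * w (uk - uk1)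
        = (η * ws g - w (uk - uk1)) ^ 2 / (2 * η) := by
      field_simp; ring
    linarith [div_nonneg h (by positivity : (0:ℝ) ≤ 2 * η), heq]
  -- strong convexity
  have hB : bregman Φ Φ' uk1 uk ≥ w (uk - uk1) ^ 2 / 2 := by
    have := hsc uk1 uk
    have hsymm : w (uk1 - uk) = w (uk - uk1) := by
      rw [show uk1 - uk = (-1 : ℝ) • (uk - uk1) by module, hw_homog]; norm_num
    rw [hsymm] at this; exact this
  -- combine
  have hI2 : ⟪g, uk1 - ustar⟫_ℝ
      = (1/η) * (bregman Φ Φ' ustar uk - bregman Φ Φ' ustar uk1 - bregman Φ Φ' uk1 uk) := by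
    rw [hiden, hupd]; field_simp
  have hinv : (0:ℝ) < 1/η := by positivity
  calc f uk - f ustar ≤ ⟪g, uk - uk1⟫_ℝ + ⟪g, uk1 - ustar⟫_ℝ := by rw [← hsplit]; exact hconv
    _ ≤ (η / 2 * ws g ^ 2 + 1 / (2 * η) * w (uk - uk1) ^ 2)
        + (1/η) * (bregman Φ Φ' ustar uk - bregman Φ Φ' ustar uk1 - bregman Φ Φ' uk1 uk) := by
        rw [← hI2]; exact add_le_add (le_trans hF hAM) le_rfl
    _ ≤ (1 / η) * (bregman Φ Φ' ustar uk - bregman Φ Φ' ustar uk1) + η / 2 * ws g ^ 2 := by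
        have h1 : (1/η) * bregman Φ Φ' uk1 uk ≥ (1/η) * (w (uk - uk1) ^ 2 / 2) :=
          mul_le_mul_of_nonneg_left hB (le_of_lt hinv)
        have h2 : (1/η) * (w (uk - uk1) ^ 2 / 2) = 1 / (2 * η) * w (uk - uk1) ^ 2 := by
          rw [one_div, one_div, mul_inv]; ring
        linarith
end

section
/- (Global convergence of the variable metric method) Assume Φ is 1-strongly convex w.r.t. ‖·‖_ω and ∇²Φ is L-Lipschitz in operator norm. Let u^{k+1} = u^k - η ∇²Φ(u^k)⁻¹(∇f(u^k) + Aᵀc(u^k)) with Au^k = b for all k. Then f((1/K)∑_{k=0}^{K-1} u^k) - f(u*) ≤ D_Φ(u*, u⁰)/(ηK) + (1/K)∑_{k=0}^{K-1}[(η/2)‖g^k‖_{ω,*}² + (Lη/2)‖∇²Φ(u^k)⁻¹ g^k‖₂² ‖u* - u^{k+1}‖₂], where g^k = ∇f(u^k) + Aᵀc(u^k). -/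
open scoped InnerProductSpace Matrix

section auxlemmas
variable {n m : ℕ}





lemma aux_grad_ineq {f : EuclideanSpace ℝ (Fin n) → ℝ} {g x y : EuclideanSpace ℝ (Fin n)}
    (hf : ConvexOn ℝ Set.univ f) (hg : HasGradientAt f g x) :
    f x + ⟪g, y - x⟫_ℝ ≤ f y := by
  rcases eq_or_ne y x with rfl | hne
  · simp
  have hline : ∀ t : ℝ, AffineMap.lineMap x y t = x + t • (y - x) := by
    intro t
    simp [AffineMap.lineMap_apply_module]
    module
  have hconvφ : ConvexOn ℝ Set.univ (f ∘ (AffineMap.lineMap x y : ℝ →ᵃ[ℝ] _)) := by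
    have := hf.comp_affineMap (AffineMap.lineMap x y : ℝ →ᵃ[ℝ] _)
    simpa using this
  have hlinederiv : HasDerivAt (fun t : ℝ => x + t • (y - x)) (y - x) 0 := by
    simpa using ((hasDerivAt_id (0:ℝ)).smul_const (y - x)).const_add x
  have hd : HasDerivAt (fun t : ℝ => f (x + t • (y - x))) ⟪g, y - x⟫_ℝ 0 := by
    have hF := hg.hasFDerivAt
    have hF' : HasFDerivAt f ((InnerProductSpace.toDual ℝ _) g) ((0:ℝ) • (y - x) + x) := by
      simpa using hF
    have h3 := hF'.comp_hasDerivAt (0:ℝ)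
      (((hasDerivAt_id (0:ℝ)).smul_const (y - x)).add_const x)
    have h2 : (f ∘ fun t : ℝ => id t • (y - x) + x) = fun t : ℝ => f (x + t • (y - x)) := by
      funext t; simp [add_comm]
    rw [h2, one_smul, InnerProductSpace.toDual_apply_apply] at h3
    exact h3
  have hd' : HasDerivAt (f ∘ (AffineMap.lineMap x y : ℝ →ᵃ[ℝ] _)) ⟪g, y - x⟫_ℝ 0 := by
    have : (f ∘ (AffineMap.lineMap x y : ℝ →ᵃ[ℝ] _)) = fun t : ℝ => f (x + t • (y - x)) := by
      funext t; simp [hline]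
    rw [this]; exact hd
  have hslope := hconvφ.le_slope_of_hasDerivAt (Set.mem_univ (0:ℝ)) (Set.mem_univ (1:ℝ))
    one_pos hd'
  have h0 : (f ∘ (AffineMap.lineMap x y : ℝ →ᵃ[ℝ] _)) 0 = f x := by simp [hline]
  have h1 : (f ∘ (AffineMap.lineMap x y : ℝ →ᵃ[ℝ] _)) 1 = f y := by simp [hline]
  rw [slope_def_field, h0, h1] at hslope
  rw [sub_zero, div_one] at hslope
  linarith

lemma aux_three_point (Φ : EuclideanSpace ℝ (Fin n) → ℝ)
    (Φ' : EuclideanSpace ℝ (Fin n) → EuclideanSpace ℝ (Fin n))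
    (x y z : EuclideanSpace ℝ (Fin n)) :
    ⟪Φ' y - Φ' z, x - y⟫_ℝ =
      bregman Φ Φ' x z - bregman Φ Φ' x y - bregman Φ Φ' y z := by
  simp only [bregman, inner_sub_left, inner_sub_right]
  ring


lemma aux_w_zero {w : EuclideanSpace ℝ (Fin n) → ℝ}
    (hw_homog : ∀ (a : ℝ) x, w (a • x) = |a| * w x) : w 0 = 0 := by
  have := hw_homog 0 0
  simpa using this

lemma aux_w_sum {w : EuclideanSpace ℝ (Fin n) → ℝ}
    (hw_homog : ∀ (a : ℝ) x, w (a • x) = |a| * w x)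
    (hw_tri : ∀ x y, w (x + y) ≤ w x + w y)
    {ι : Type*} (s : Finset ι) (v : ι → EuclideanSpace ℝ (Fin n)) :
    w (∑ i ∈ s, v i) ≤ ∑ i ∈ s, w (v i) := by
  classical
  induction s using Finset.cons_induction with
  | empty => simp [aux_w_zero hw_homog]
  | cons a s ha ih =>
    rw [Finset.sum_cons, Finset.sum_cons]
    exact (hw_tri _ _).trans (by linarith)

/-- lower bound: ∃ c > 0, ∀ x, c * ‖x‖ ≤ w x -/
lemma aux_w_lower {w : EuclideanSpace ℝ (Fin n) → ℝ}
    (hw_nonneg : ∀ x, 0 ≤ w x)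
    (hw_homog : ∀ (a : ℝ) x, w (a • x) = |a| * w x)
    (hw_tri : ∀ x y, w (x + y) ≤ w x + w y)
    (hw_def : ∀ x, w x = 0 → x = 0) :
    ∃ c : ℝ, 0 < c ∧ ∀ x, c * ‖x‖ ≤ w x := by
  classical
  rcases Nat.eq_zero_or_pos n with hn | hn
  · refine ⟨1, one_pos, fun x => ?_⟩
    subst hn
    have hx : x = 0 := Subsingleton.elim x 0
    simp [hx, aux_w_zero hw_homog]
  -- w is Lipschitz hence continuous
  set b := EuclideanSpace.basisFun (Fin n) ℝ with hb
  set M : ℝ := ∑ i : Fin n, w (b i) with hM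
  have hwle : ∀ x : EuclideanSpace ℝ (Fin n), w x ≤ M * ‖x‖ := by
    intro x
    have hxrepr : x = ∑ i : Fin n, x i • b i := by
      have := b.sum_repr x
      simp only [EuclideanSpace.basisFun_repr] at this
      exact this.symm
    calc w x = w (∑ i : Fin n, x i • b i) := by rw [← hxrepr]
      _ ≤ ∑ i : Fin n, w (x i • b i) := aux_w_sum hw_homog hw_tri _ _
      _ = ∑ i : Fin n, |x i| * w (b i) := by simp [hw_homog]
      _ ≤ ∑ i : Fin n, ‖x‖ * w (b i) := by
          refine Finset.sum_le_sum fun i _ => ?_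
          have h1 : |x i| ≤ ‖x‖ := by
            have h2 : ⟪EuclideanSpace.single i (1:ℝ), x⟫_ℝ = x i := by
              simp [EuclideanSpace.inner_single_left]
            calc |x i| = |⟪EuclideanSpace.single i (1:ℝ), x⟫_ℝ| := by rw [h2]
              _ ≤ ‖EuclideanSpace.single i (1:ℝ)‖ * ‖x‖ := abs_real_inner_le_norm _ _
              _ = ‖x‖ := by simp [EuclideanSpace.norm_single]
          exact mul_le_mul_of_nonneg_right h1 (hw_nonneg _)
      _ = M * ‖x‖ := by rw [hM, Finset.sum_mul]; exact Finset.sum_congr rfl (by intros; ring)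
  have hwcont : Continuous w := by
    have hlip : ∀ x y : EuclideanSpace ℝ (Fin n), |w x - w y| ≤ M * ‖x - y‖ := by
      intro x y
      have h1 : w x ≤ w y + w (x - y) := by
        have := hw_tri (y) (x - y); simpa using this
      have h2 : w y ≤ w x + w (x - y) := by
        have := hw_tri (x) (y - x)
        have hneg : w (y - x) = w (x - y) := by
          have := hw_homog (-1) (x - y); simpa [neg_sub] using this
        simp only [add_sub_cancel] at this
        linarith [this, hneg.symm.le]
      have h3 := hwle (x - y)
      rw [abs_sub_le_iff]; constructor <;> linarith
    have : LipschitzWith (Real.toNNReal M) w := by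
      refine LipschitzWith.of_dist_le_mul fun x y => ?_
      rw [Real.dist_eq, dist_eq_norm]
      calc |w x - w y| ≤ M * ‖x - y‖ := hlip x y
        _ ≤ (Real.toNNReal M) * ‖x - y‖ := by
            gcongr
            exact Real.le_coe_toNNReal M
    exact this.continuous
  -- compactness
  haveI : Nonempty (Fin n) := ⟨⟨0, hn⟩⟩
  have hsph : (Metric.sphere (0 : EuclideanSpace ℝ (Fin n)) 1).Nonempty := by
    obtain ⟨x, hx⟩ := exists_norm_eq (EuclideanSpace ℝ (Fin n)) (zero_le_one)
    exact ⟨x, by simpa [Metric.mem_sphere, dist_eq_norm] using hx⟩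
  obtain ⟨z, hz, hzmin⟩ := (isCompact_sphere (0 : EuclideanSpace ℝ (Fin n)) 1).exists_isMinOn
    hsph hwcont.continuousOn
  have hznorm : ‖z‖ = 1 := by simpa [dist_eq_norm] using hz
  have hzpos : 0 < w z := by
    rcases (hw_nonneg z).lt_or_eq with h | h
    · exact h
    · exfalso
      have := hw_def z h.symm
      rw [this] at hznorm; simp at hznorm
  refine ⟨w z, hzpos, fun x => ?_⟩
  rcases eq_or_ne x 0 with rfl | hx0
  · simp [hw_nonneg]
  have hxn : (0:ℝ) < ‖x‖ := norm_pos_iff.mpr hx0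
  have hxs : (‖x‖⁻¹ • x) ∈ Metric.sphere (0 : EuclideanSpace ℝ (Fin n)) 1 := by
    simp [norm_smul, abs_of_pos (inv_pos.mpr hxn), inv_mul_cancel₀ hxn.ne']
  have h1 : w z ≤ w (‖x‖⁻¹ • x) := hzmin hxs
  rw [hw_homog, abs_of_pos (inv_pos.mpr hxn)] at h1
  calc w z * ‖x‖ ≤ (‖x‖⁻¹ * w x) * ‖x‖ := by gcongr
    _ = w x := by field_simp

lemma aux_fenchel {w ws : EuclideanSpace ℝ (Fin n) → ℝ}
    (hw_nonneg : ∀ x, 0 ≤ w x)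
    (hw_homog : ∀ (a : ℝ) x, w (a • x) = |a| * w x)
    (hw_tri : ∀ x y, w (x + y) ≤ w x + w y)
    (hw_def : ∀ x, w x = 0 → x = 0)
    (hdual : ∀ g, ws g = sSup {r : ℝ | ∃ x, w x ≤ 1 ∧ r = ⟪g, x⟫_ℝ})
    (g x : EuclideanSpace ℝ (Fin n)) :
    0 ≤ ws g ∧ ⟪g, x⟫_ℝ ≤ ws g * w x := by
  have w0 : w 0 = 0 := by have := hw_homog 0 0; simpa using this
  obtain ⟨c, hc, hcle⟩ := aux_w_lower hw_nonneg hw_homog hw_tri hw_def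
  set S : Set ℝ := {r : ℝ | ∃ x, w x ≤ 1 ∧ r = ⟪g, x⟫_ℝ} with hS
  have hne : (0:ℝ) ∈ S := ⟨0, by simp [w0]⟩
  have hbdd : BddAbove S := by
    refine ⟨‖g‖ * c⁻¹, fun r hr => ?_⟩
    obtain ⟨y, hy1, rfl⟩ := hr
    have h1 : ⟪g, y⟫_ℝ ≤ ‖g‖ * ‖y‖ := real_inner_le_norm g y
    have h2 : ‖y‖ ≤ c⁻¹ := by
      have h3 := hcle y
      rw [← mul_le_mul_iff_right₀ hc, mul_inv_cancel₀ hc.ne']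
      linarith
    calc ⟪g, y⟫_ℝ ≤ ‖g‖ * ‖y‖ := h1
      _ ≤ ‖g‖ * c⁻¹ := by gcongr
  have hws0 : 0 ≤ ws g := by rw [hdual g]; exact le_csSup hbdd hne
  refine ⟨hws0, ?_⟩
  rcases (hw_nonneg x).lt_or_eq with hwx | hwx
  · have hx' : w ((w x)⁻¹ • x) ≤ 1 := by
      rw [hw_homog, abs_of_pos (inv_pos.mpr hwx), inv_mul_cancel₀ hwx.ne']
    have hmem : ⟪g, (w x)⁻¹ • x⟫_ℝ ∈ S := ⟨_, hx', rfl⟩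
    have h1 : ⟪g, (w x)⁻¹ • x⟫_ℝ ≤ ws g := by rw [hdual g]; exact le_csSup hbdd hmem
    rw [real_inner_smul_right] at h1
    calc ⟪g, x⟫_ℝ = w x * ((w x)⁻¹ * ⟪g, x⟫_ℝ) := by field_simp
      _ ≤ w x * ws g := by
          exact mul_le_mul_of_nonneg_left h1 (hw_nonneg x)
      _ = ws g * w x := mul_comm _ _
  · have hx0 : x = 0 := hw_def x hwx.symm
    simp [hx0, w0, mul_nonneg hws0]

lemma aux_taylor {Φ' : EuclideanSpace ℝ (Fin n) → EuclideanSpace ℝ (Fin n)}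
    {H : EuclideanSpace ℝ (Fin n) → Matrix (Fin n) (Fin n) ℝ} {L : ℝ}
    (hΦ'' : ∀ x, HasFDerivAt Φ' (Matrix.toEuclideanCLM (𝕜 := ℝ) (H x)) x)
    (hLip : ∀ x y, ‖Matrix.toEuclideanCLM (𝕜 := ℝ) (H x)
        - Matrix.toEuclideanCLM (𝕜 := ℝ) (H y)‖ ≤ L * ‖x - y‖)
    (x y : EuclideanSpace ℝ (Fin n)) :
    ‖Φ' y - Φ' x - Matrix.toEuclideanCLM (𝕜 := ℝ) (H x) (y - x)‖ ≤ L / 2 * ‖y - x‖ ^ 2 := by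
  set v := y - x with hv
  set g : ℝ → EuclideanSpace ℝ (Fin n) :=
    fun t => Φ' (x + t • v) - Φ' x - t • (Matrix.toEuclideanCLM (𝕜 := ℝ) (H x) v) with hg
  have hgd : ∀ t : ℝ, HasDerivAt g
      ((Matrix.toEuclideanCLM (𝕜 := ℝ) (H (x + t • v))) v
        - Matrix.toEuclideanCLM (𝕜 := ℝ) (H x) v) t := by
    intro t
    have hline : HasDerivAt (fun s : ℝ => x + s • v) v t := by
      simpa using ((hasDerivAt_id t).smul_const v).const_add x
    have h1 : HasDerivAt (fun s : ℝ => Φ' (x + s • v))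
        ((Matrix.toEuclideanCLM (𝕜 := ℝ) (H (x + t • v))) v) t := by
      have := (hΦ'' (x + t • v)).comp_hasDerivAt t hline
      exact this
    have h2 : HasDerivAt (fun s : ℝ => s • (Matrix.toEuclideanCLM (𝕜 := ℝ) (H x) v))
        (Matrix.toEuclideanCLM (𝕜 := ℝ) (H x) v) t := by
      simpa using (hasDerivAt_id t).smul_const (Matrix.toEuclideanCLM (𝕜 := ℝ) (H x) v)
    exact (h1.sub_const (Φ' x)).sub h2
  have key : ∀ s ∈ Set.Icc (0:ℝ) 1, ‖g s‖ ≤ L * ‖v‖ ^ 2 / 2 * s ^ 2 := by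
    intro s hs
    have := image_norm_le_of_norm_deriv_right_le_deriv_boundary
      (f := g) (f' := fun t => (Matrix.toEuclideanCLM (𝕜 := ℝ) (H (x + t • v))) v
        - Matrix.toEuclideanCLM (𝕜 := ℝ) (H x) v)
      (a := 0) (b := 1)
      (fun t _ => (hgd t).continuousAt.continuousWithinAt)
      (fun t _ => (hgd t).hasDerivWithinAt)
      (B := fun t => L * ‖v‖ ^ 2 / 2 * t ^ 2) (B' := fun t => L * ‖v‖ ^ 2 * t)
      (by simp [hg])
      (fun t => by
        have h := ((hasDerivAt_pow 2 t).const_mul (L * ‖v‖ ^ 2 / 2))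
        simpa [mul_comm, mul_assoc, mul_left_comm] using h.congr_deriv (by ring))
      (fun t ht => ?_) hs
    · exact this
    · have h1 : ‖(Matrix.toEuclideanCLM (𝕜 := ℝ) (H (x + t • v))) v
          - Matrix.toEuclideanCLM (𝕜 := ℝ) (H x) v‖
          ≤ ‖Matrix.toEuclideanCLM (𝕜 := ℝ) (H (x + t • v))
              - Matrix.toEuclideanCLM (𝕜 := ℝ) (H x)‖ * ‖v‖ := by
        have := (Matrix.toEuclideanCLM (𝕜 := ℝ) (H (x + t • v))
          - Matrix.toEuclideanCLM (𝕜 := ℝ) (H x)).le_opNorm v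
        rwa [ContinuousLinearMap.sub_apply] at this
      have h2 := hLip (x + t • v) x
      have h3 : ‖x + t • v - x‖ = t * ‖v‖ := by
        simp [norm_smul, abs_of_nonneg ht.1]
      calc ‖(Matrix.toEuclideanCLM (𝕜 := ℝ) (H (x + t • v))) v
            - Matrix.toEuclideanCLM (𝕜 := ℝ) (H x) v‖
          ≤ (L * (t * ‖v‖)) * ‖v‖ := by
            refine h1.trans ?_
            have := h2; rw [h3] at this
            exact mul_le_mul_of_nonneg_right this (norm_nonneg v)
        _ = L * ‖v‖ ^ 2 * t := by ring
  have h1 := key 1 (by norm_num)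
  have hg1 : g 1 = Φ' y - Φ' x - Matrix.toEuclideanCLM (𝕜 := ℝ) (H x) (y - x) := by
    simp [hg, hv]
  rw [hg1] at h1
  calc ‖Φ' y - Φ' x - Matrix.toEuclideanCLM (𝕜 := ℝ) (H x) (y - x)‖
      ≤ L * ‖y - x‖ ^ 2 / 2 * 1 ^ 2 := h1
    _ = L / 2 * ‖y - x‖ ^ 2 := by ring

lemma aux_adjoint (A : Matrix (Fin m) (Fin n) ℝ) (c : EuclideanSpace ℝ (Fin m))
    (v : EuclideanSpace ℝ (Fin n)) :
    ⟪Matrix.toEuclideanLin Aᵀ c, v⟫_ℝ = ⟪c, Matrix.toEuclideanLin A v⟫_ℝ := by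
  simp only [PiLp.inner_apply, RCLike.inner_apply, starRingEnd_apply, star_trivial]
  have hL : ∀ j, (Matrix.toEuclideanLin Aᵀ c) j = ∑ i, A i j * c i := by
    intro j
    simp [Matrix.toEuclideanLin_apply, Matrix.mulVec, dotProduct,
      Matrix.transpose_apply]
  have hR : ∀ i, (Matrix.toEuclideanLin A v) i = ∑ j, A i j * v j := by
    intro i
    simp [Matrix.toEuclideanLin_apply, Matrix.mulVec, dotProduct]
  conv_lhs => enter [2, j]; rw [mul_comm]
  conv_rhs => enter [2, i]; rw [mul_comm]
  calc ∑ j, (Matrix.toEuclideanLin Aᵀ c) j * v j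
      = ∑ j, ∑ i, (A i j * c i) * v j := by
        refine Finset.sum_congr rfl fun j _ => ?_
        rw [hL j, Finset.sum_mul]
    _ = ∑ i, ∑ j, (A i j * c i) * v j := Finset.sum_comm
    _ = ∑ i, c i * (Matrix.toEuclideanLin A v) i := by
        refine Finset.sum_congr rfl fun i _ => ?_
        rw [hR i, Finset.mul_sum]
        exact Finset.sum_congr rfl fun j _ => by ring

lemma aux_inv_apply (M : Matrix (Fin n) (Fin n) ℝ) (hM : M.PosDef)
    (z : EuclideanSpace ℝ (Fin n)) :
    Matrix.toEuclideanLin M (Matrix.toEuclideanLin M⁻¹ z) = z := by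
  have hdet : IsUnit M.det := isUnit_iff_ne_zero.mpr hM.det_pos.ne'
  have hmul : M * M⁻¹ = 1 := Matrix.mul_nonsing_inv M hdet
  have h1 : Matrix.toEuclideanCLM (𝕜 := ℝ) M (Matrix.toEuclideanCLM (𝕜 := ℝ) M⁻¹ z) = z := by
    have := map_mul (Matrix.toEuclideanCLM (n := Fin n) (𝕜 := ℝ)) M M⁻¹
    calc Matrix.toEuclideanCLM (𝕜 := ℝ) M (Matrix.toEuclideanCLM (𝕜 := ℝ) M⁻¹ z)
        = (Matrix.toEuclideanCLM (𝕜 := ℝ) M * Matrix.toEuclideanCLM (𝕜 := ℝ) M⁻¹) z := rfl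
      _ = Matrix.toEuclideanCLM (𝕜 := ℝ) (M * M⁻¹) z := by rw [this]
      _ = Matrix.toEuclideanCLM (𝕜 := ℝ) (1 : Matrix (Fin n) (Fin n) ℝ) z := by rw [hmul]
      _ = z := by rw [map_one]; rfl
  have hc : ∀ (N : Matrix (Fin n) (Fin n) ℝ) (x : EuclideanSpace ℝ (Fin n)),
      Matrix.toEuclideanCLM (𝕜 := ℝ) N x = Matrix.toEuclideanLin N x := by
    intro N x
    rw [← Matrix.coe_toEuclideanCLM_eq_toEuclideanLin]
    rfl
  rw [← hc, ← hc]; exact h1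


lemma aux_clm_eq_lin (N : Matrix (Fin n) (Fin n) ℝ) (x : EuclideanSpace ℝ (Fin n)) :
    Matrix.toEuclideanCLM (𝕜 := ℝ) N x = Matrix.toEuclideanLin N x := by
  rw [← Matrix.coe_toEuclideanCLM_eq_toEuclideanLin]
  rfl

end auxlemmas

set_option maxHeartbeats 1000000 in
theorem variable_metric_global_sublinear {n m : ℕ}
    (f Φ : EuclideanSpace ℝ (Fin n) → ℝ)
    (f' Φ' : EuclideanSpace ℝ (Fin n) → EuclideanSpace ℝ (Fin n))
    (H : EuclideanSpace ℝ (Fin n) → Matrix (Fin n) (Fin n) ℝ)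
    (w ws : EuclideanSpace ℝ (Fin n) → ℝ)
    (hw_nonneg : ∀ x, 0 ≤ w x)
    (hw_homog : ∀ (a : ℝ) x, w (a • x) = |a| * w x)
    (hw_tri : ∀ x y, w (x + y) ≤ w x + w y)
    (hw_def : ∀ x, w x = 0 → x = 0)
    (hdual : ∀ g, ws g = sSup {r : ℝ | ∃ x, w x ≤ 1 ∧ r = ⟪g, x⟫_ℝ})
    (A : Matrix (Fin m) (Fin n) ℝ) (b : EuclideanSpace ℝ (Fin m))
    (c : ℕ → EuclideanSpace ℝ (Fin m))
    (u : ℕ → EuclideanSpace ℝ (Fin n)) (ustar : EuclideanSpace ℝ (Fin n))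
    (η L : ℝ) (hη : 0 < η) (hL : 0 < L) (K : ℕ) (hK : 0 < K)
    (hfconv : ConvexOn ℝ Set.univ f)
    (hf' : ∀ x, HasGradientAt f (f' x) x)
    (hΦ' : ∀ x, HasGradientAt Φ (Φ' x) x)
    (hΦ'' : ∀ x, HasFDerivAt Φ' (Matrix.toEuclideanCLM (𝕜 := ℝ) (H x)) x)
    (hHpos : ∀ x, (H x).PosDef)
    (hsc : ∀ x y, bregman Φ Φ' x y ≥ w (x - y) ^ 2 / 2)
    (hLip : ∀ x y, ‖Matrix.toEuclideanCLM (𝕜 := ℝ) (H x)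
        - Matrix.toEuclideanCLM (𝕜 := ℝ) (H y)‖ ≤ L * ‖x - y‖)
    (hupdate : ∀ k, u (k + 1) = u k
      - η • Matrix.toEuclideanLin (H (u k))⁻¹
          (f' (u k) + Matrix.toEuclideanLin Aᵀ (c k)))
    (hcon : ∀ k, Matrix.toEuclideanLin A (u k) = b)
    (hstar_feas : Matrix.toEuclideanLin A ustar = b)
    (hstar_min : ∀ v, Matrix.toEuclideanLin A v = b → f ustar ≤ f v) :
    f ((1 / (K : ℝ)) • ∑ k ∈ Finset.range K, u k) - f ustar ≤
      bregman Φ Φ' ustar (u 0) / (η * K)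
        + (1 / (K : ℝ)) * ∑ k ∈ Finset.range K,
            (η / 2 * ws (f' (u k) + Matrix.toEuclideanLin Aᵀ (c k)) ^ 2
              + L * η / 2
                * ‖Matrix.toEuclideanLin (H (u k))⁻¹
                    (f' (u k) + Matrix.toEuclideanLin Aᵀ (c k))‖ ^ 2
                * ‖ustar - u (k + 1)‖) := by
  have hKpos : (0:ℝ) < (K:ℝ) := by exact_mod_cast hK
  -- abbreviations
  set G : ℕ → EuclideanSpace ℝ (Fin n) :=
    fun k => f' (u k) + Matrix.toEuclideanLin Aᵀ (c k) with hG
  set d : ℕ → EuclideanSpace ℝ (Fin n) :=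
    fun k => Matrix.toEuclideanLin (H (u k))⁻¹ (G k) with hd
  set D : ℕ → ℝ := fun k => bregman Φ Φ' ustar (u k) with hD
  have hdiff : ∀ k, u k - u (k + 1) = η • d k := by
    intro k; rw [hupdate k]; exact (sub_sub_cancel _ _)
  have hHd : ∀ k, Matrix.toEuclideanLin (H (u k)) (d k) = G k := by
    intro k; exact aux_inv_apply _ (hHpos _) _
  have hDnonneg : ∀ k, 0 ≤ D k := by
    intro k
    have := hsc ustar (u k)
    have h2 : 0 ≤ w (ustar - u k) ^ 2 / 2 := by positivity
    exact h2.trans this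
  -- per-step inequality
  have hstep : ∀ k, f (u k) - f ustar ≤ (D k - D (k + 1)) / η
      + (η / 2 * ws (G k) ^ 2 + L * η / 2 * ‖d k‖ ^ 2 * ‖ustar - u (k + 1)‖) := by
    intro k
    have hT1T2 : f (u k) - f ustar ≤ ⟪G k, u k - u (k+1)⟫_ℝ + ⟪G k, u (k+1) - ustar⟫_ℝ := by
      have h1 := aux_grad_ineq hfconv (hf' (u k)) (y := ustar)
      have h2 : ⟪Matrix.toEuclideanLin Aᵀ (c k), u k - ustar⟫_ℝ = 0 := by
        rw [aux_adjoint]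
        have : Matrix.toEuclideanLin A (u k - ustar) = 0 := by
          rw [map_sub, hcon k, hstar_feas, sub_self]
        rw [this, inner_zero_right]
      have h3 : ⟪G k, u k - ustar⟫_ℝ = ⟪f' (u k), u k - ustar⟫_ℝ := by
        rw [hG]; simp only [inner_add_left, h2, add_zero]
      have h4 : ⟪f' (u k), ustar - u k⟫_ℝ = - ⟪f' (u k), u k - ustar⟫_ℝ := by
        rw [← inner_neg_right, neg_sub]
      have h5 : ⟪G k, u k - ustar⟫_ℝ
          = ⟪G k, u k - u (k+1)⟫_ℝ + ⟪G k, u (k+1) - ustar⟫_ℝ := by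
        rw [← inner_add_right]; congr 1; abel
      rw [← h5, h3]; linarith
    -- the residual
    set r : EuclideanSpace ℝ (Fin n) := Φ' (u (k+1)) - Φ' (u k)
      - Matrix.toEuclideanCLM (𝕜 := ℝ) (H (u k)) (u (k+1) - u k) with hr
    have hrbound : ‖r‖ ≤ L / 2 * ‖u (k+1) - u k‖ ^ 2 := aux_taylor hΦ'' hLip _ _
    have hCLMeq : Matrix.toEuclideanCLM (𝕜 := ℝ) (H (u k)) (u k - u (k+1))
        = η • G k := by
      rw [hdiff k, map_smul, aux_clm_eq_lin, hHd k]
    have hCLMeq2 : Matrix.toEuclideanCLM (𝕜 := ℝ) (H (u k)) (u k - u (k+1))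
        = Φ' (u k) - Φ' (u (k+1)) + r := by
      have : u k - u (k+1) = -(u (k+1) - u k) := by abel
      rw [this, map_neg, hr]; abel
    have hE2 : η * ⟪G k, u (k+1) - ustar⟫_ℝ
        = ⟪Φ' (u k) - Φ' (u (k+1)), u (k+1) - ustar⟫_ℝ + ⟪r, u (k+1) - ustar⟫_ℝ := by
      rw [← inner_add_left, ← hCLMeq2, hCLMeq, real_inner_smul_left]
    have hE3 : ⟪Φ' (u k) - Φ' (u (k+1)), u (k+1) - ustar⟫_ℝ
        = D k - D (k+1) - bregman Φ Φ' (u (k+1)) (u k) := by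
      have := aux_three_point Φ Φ' ustar (u (k+1)) (u k)
      have heq : ⟪Φ' (u k) - Φ' (u (k+1)), u (k+1) - ustar⟫_ℝ
          = ⟪Φ' (u (k+1)) - Φ' (u k), ustar - u (k+1)⟫_ℝ := by
        rw [← inner_neg_neg]; congr 1 <;> abel
      rw [heq, this, hD]
    have hnorm_step : ‖u (k+1) - u k‖ = η * ‖d k‖ := by
      have : u (k+1) - u k = -(η • d k) := by rw [← hdiff k]; abel
      rw [this, norm_neg, norm_smul, Real.norm_eq_abs, abs_of_pos hη]
    have hE4 : ⟪r, u (k+1) - ustar⟫_ℝ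
        ≤ L * η ^ 2 / 2 * ‖d k‖ ^ 2 * ‖ustar - u (k+1)‖ := by
      have h1 : ⟪r, u (k+1) - ustar⟫_ℝ ≤ ‖r‖ * ‖u (k+1) - ustar‖ := real_inner_le_norm _ _
      have h2 : ‖u (k+1) - ustar‖ = ‖ustar - u (k+1)‖ := norm_sub_rev _ _
      have h3 : ‖r‖ ≤ L / 2 * (η * ‖d k‖) ^ 2 := by rw [← hnorm_step]; exact hrbound
      calc ⟪r, u (k+1) - ustar⟫_ℝ ≤ ‖r‖ * ‖ustar - u (k+1)‖ := by rw [← h2]; exact h1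
        _ ≤ (L / 2 * (η * ‖d k‖) ^ 2) * ‖ustar - u (k+1)‖ :=
            mul_le_mul_of_nonneg_right h3 (norm_nonneg _)
        _ = L * η ^ 2 / 2 * ‖d k‖ ^ 2 * ‖ustar - u (k + 1)‖ := by ring
    have hE5 : η * ⟪G k, u k - u (k+1)⟫_ℝ - bregman Φ Φ' (u (k+1)) (u k)
        ≤ η ^ 2 / 2 * ws (G k) ^ 2 := by
      obtain ⟨hws0, hfen⟩ := aux_fenchel hw_nonneg hw_homog hw_tri hw_def hdual
        (G k) (u k - u (k+1))
      have hwz : w (u (k+1) - u k) = w (u k - u (k+1)) := by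
        have := hw_homog (-1) (u k - u (k+1))
        simp only [neg_smul, one_smul, neg_sub, abs_neg, abs_one, one_mul] at this
        exact this
      have hbr := hsc (u (k+1)) (u k)
      rw [hwz] at hbr
      have hwnn := hw_nonneg (u k - u (k+1))
      nlinarith [sq_nonneg (η * ws (G k) - w (u k - u (k+1))), hη.le,
        mul_le_mul_of_nonneg_left hfen hη.le]
    have hfinal : η * (f (u k) - f ustar) ≤ (D k - D (k+1))
        + (η ^ 2 / 2 * ws (G k) ^ 2 + L * η ^ 2 / 2 * ‖d k‖ ^ 2 * ‖ustar - u (k+1)‖) := by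
      have := mul_le_mul_of_nonneg_left hT1T2 hη.le
      rw [mul_add, hE2, hE3] at this
      linarith
    rw [← mul_le_mul_iff_right₀ hη]
    have hrw : η * ((D k - D (k + 1)) / η
        + (η / 2 * ws (G k) ^ 2 + L * η / 2 * ‖d k‖ ^ 2 * ‖ustar - u (k + 1)‖))
        = (D k - D (k+1))
          + (η ^ 2 / 2 * ws (G k) ^ 2 + L * η ^ 2 / 2 * ‖d k‖ ^ 2 * ‖ustar - u (k+1)‖) := by
      have hcan : η * ((D k - D (k + 1)) / η) = D k - D (k + 1) := by
        rw [mul_comm, div_mul_cancel₀ _ hη.ne']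
      rw [mul_add, hcan]; ring
    rw [hrw]
    exact hfinal
  -- sum the per-step inequalities
  have hsum : ∑ k ∈ Finset.range K, (f (u k) - f ustar)
      ≤ D 0 / η + ∑ k ∈ Finset.range K,
          (η / 2 * ws (G k) ^ 2 + L * η / 2 * ‖d k‖ ^ 2 * ‖ustar - u (k + 1)‖) := by
    have h1 := Finset.sum_le_sum (fun k (_ : k ∈ Finset.range K) => hstep k)
    have h2 : ∑ k ∈ Finset.range K, ((D k - D (k + 1)) / η
        + (η / 2 * ws (G k) ^ 2 + L * η / 2 * ‖d k‖ ^ 2 * ‖ustar - u (k + 1)‖))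
        = (D 0 - D K) / η + ∑ k ∈ Finset.range K,
          (η / 2 * ws (G k) ^ 2 + L * η / 2 * ‖d k‖ ^ 2 * ‖ustar - u (k + 1)‖) := by
      rw [Finset.sum_add_distrib, ← Finset.sum_div, Finset.sum_range_sub' (fun k => D k)]
    rw [h2] at h1
    have h4 : (D 0 - D K) / η ≤ D 0 / η := by
      gcongr
      linarith [hDnonneg K]
    linarith
  -- Jensen
  have hJ : f ((1 / (K : ℝ)) • ∑ k ∈ Finset.range K, u k)
      ≤ ∑ k ∈ Finset.range K, (1 / (K : ℝ)) * f (u k) := by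
    have h0 : ∀ i ∈ Finset.range K, (0:ℝ) ≤ 1 / (K:ℝ) := fun i _ => by positivity
    have h1 : ∑ _i ∈ Finset.range K, (1:ℝ) / (K:ℝ) = 1 := by
      rw [Finset.sum_const, Finset.card_range, nsmul_eq_mul, mul_one_div,
        div_self hKpos.ne']
    have hmem : ∀ i ∈ Finset.range K, u i ∈ (Set.univ : Set (EuclideanSpace ℝ (Fin n))) :=
      fun i _ => Set.mem_univ _
    have := hfconv.map_sum_le h0 h1 hmem
    rw [Finset.smul_sum]
    exact this
  -- conclude
  have hfin : f ((1 / (K : ℝ)) • ∑ k ∈ Finset.range K, u k) - f ustar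
      ≤ (1 / (K:ℝ)) * ∑ k ∈ Finset.range K, (f (u k) - f ustar) := by
    have h1 : ∑ k ∈ Finset.range K, (1 / (K : ℝ)) * f (u k)
        = (1 / (K:ℝ)) * ∑ k ∈ Finset.range K, f (u k) := by rw [Finset.mul_sum]
    have h2 : (1 / (K:ℝ)) * ∑ k ∈ Finset.range K, (f (u k) - f ustar)
        = (1 / (K:ℝ)) * ∑ k ∈ Finset.range K, f (u k) - f ustar := by
      rw [Finset.sum_sub_distrib, mul_sub, Finset.sum_const, Finset.card_range,
        nsmul_eq_mul]
      congr 1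
      rw [one_div, inv_mul_cancel_left₀ hKpos.ne']
    rw [h2]
    linarith [hJ, h1]
  have hmul := mul_le_mul_of_nonneg_left hsum (by positivity : (0:ℝ) ≤ 1 / (K:ℝ))
  rw [mul_add] at hmul
  have hDK : (1 / (K:ℝ)) * (D 0 / η) = bregman Φ Φ' ustar (u 0) / (η * K) := by
    rw [hD, one_div_mul_eq_div, div_div]
  rw [hDK] at hmul
  exact hfin.trans hmul
end

section
/- (Global convergence of quasi-Newton) Let u^{k+1} = u^k - η B_k⁻¹(∇f(u^k) + Aᵀc(u^k)) where B_{k+1}(u^{k+1} - u^k) = ∇f(u^{k+1}) - ∇f(u^k) (secant condition) and ‖B_{k+1}B_k⁻¹ - I‖₂ ≤ ηL, with Au^k = b for all k. Then f((1/K)∑_{k=0}^{K-1} u^k) - f(u*) ≤ D_f(u*, u⁰)/(ηK) + (η/K)∑_{k=0}^{K-1}[‖g^k‖²_{B_k⁻¹} + L‖g^k‖₂‖u* - u^{k+1}‖₂], where g^k = ∇f(u^k) + Aᵀc(u^k) and ‖v‖²_{B⁻¹} = vᵀB⁻¹v. -/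
open scoped InnerProductSpace Matrix

/-- Gradient inequality for a convex differentiable function. -/
lemma grad_ineq_aux {n : ℕ} (f : EuclideanSpace ℝ (Fin n) → ℝ)
    (f' : EuclideanSpace ℝ (Fin n) → EuclideanSpace ℝ (Fin n))
    (hfconv : ConvexOn ℝ Set.univ f)
    (hf' : ∀ x, HasGradientAt f (f' x) x)
    (x y : EuclideanSpace ℝ (Fin n)) :
    f x + ⟪f' x, y - x⟫_ℝ ≤ f y := by
  set φ : ℝ → ℝ := fun t => f (x + t • (y - x)) with hφdef
  have hline : ∀ t : ℝ, HasDerivAt (fun t : ℝ => x + t • (y - x)) (y - x) t := by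
    intro t
    simpa using ((hasDerivAt_id t).smul_const (y - x)).const_add x
  have hfd : HasDerivAt φ ⟪f' x, y - x⟫_ℝ 0 := by
    have h1 : HasFDerivAt f (InnerProductSpace.toDual ℝ _ (f' x)) x :=
      (hf' x).hasFDerivAt
    have h0 : x + (0 : ℝ) • (y - x) = x := by simp
    have h1' : HasFDerivAt f (InnerProductSpace.toDual ℝ _ (f' x))
        ((fun t : ℝ => x + t • (y - x)) 0) := by simpa using h1
    have h2 := h1'.comp_hasDerivAt 0 (hline 0)
    simp only [InnerProductSpace.toDual_apply_apply] at h2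
    exact h2
  have hconv : ConvexOn ℝ Set.univ φ := by
    have := hfconv.comp_affineMap (AffineMap.lineMap x y : ℝ →ᵃ[ℝ] _)
    have heq : (f ∘ (AffineMap.lineMap x y : ℝ →ᵃ[ℝ] _)) = φ := by
      funext t
      simp [AffineMap.lineMap_apply, hφdef, add_comm]
    rw [heq, Set.preimage_univ] at this
    exact this
  have hs := hconv.le_slope_of_hasDerivAt (Set.mem_univ (0 : ℝ))
    (Set.mem_univ (1 : ℝ)) one_pos hfd
  have hslope : slope φ 0 1 = f y - f x := by
    simp [slope_def_field, hφdef]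
  rw [hslope] at hs
  linarith


set_option maxHeartbeats 1000000 in
theorem quasi_newton_global_sublinear {n m : ℕ}
    (f : EuclideanSpace ℝ (Fin n) → ℝ)
    (f' : EuclideanSpace ℝ (Fin n) → EuclideanSpace ℝ (Fin n))
    (B : ℕ → Matrix (Fin n) (Fin n) ℝ)
    (A : Matrix (Fin m) (Fin n) ℝ) (b : EuclideanSpace ℝ (Fin m))
    (c : ℕ → EuclideanSpace ℝ (Fin m))
    (u : ℕ → EuclideanSpace ℝ (Fin n)) (ustar : EuclideanSpace ℝ (Fin n))
    (η L : ℝ) (hη : 0 < η) (hL : 0 < L) (K : ℕ) (hK : 0 < K)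
    (hfconv : ConvexOn ℝ Set.univ f)
    (hf' : ∀ x, HasGradientAt f (f' x) x)
    (hBpos : ∀ k, (B k).PosDef)
    (hBsym : ∀ k, (B k).IsSymm)
    (hupdate : ∀ k, u (k + 1) = u k
      - η • Matrix.toEuclideanLin (B k)⁻¹
          (f' (u k) + Matrix.toEuclideanLin Aᵀ (c k)))
    (hsecant : ∀ k, Matrix.toEuclideanLin (B (k + 1)) (u (k + 1) - u k)
      = f' (u (k + 1)) - f' (u k))
    (hBclose : ∀ k, ‖Matrix.toEuclideanCLM (𝕜 := ℝ) (B (k + 1) * (B k)⁻¹) - 1‖ ≤ η * L)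
    (hcon : ∀ k, Matrix.toEuclideanLin A (u k) = b)
    (hstar_feas : Matrix.toEuclideanLin A ustar = b)
    (hstar_min : ∀ v, Matrix.toEuclideanLin A v = b → f ustar ≤ f v) :
    f ((1 / (K : ℝ)) • ∑ k ∈ Finset.range K, u k) - f ustar ≤
      bregman f f' ustar (u 0) / (η * K)
        + (η / (K : ℝ)) * ∑ k ∈ Finset.range K,
            (⟪f' (u k) + Matrix.toEuclideanLin Aᵀ (c k),
                Matrix.toEuclideanLin (B k)⁻¹
                  (f' (u k) + Matrix.toEuclideanLin Aᵀ (c k))⟫_ℝ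
              + L * ‖f' (u k) + Matrix.toEuclideanLin Aᵀ (c k)‖
                * ‖ustar - u (k + 1)‖) := by
  -- abbreviations
  set g : ℕ → EuclideanSpace ℝ (Fin n) :=
    fun k => f' (u k) + Matrix.toEuclideanLin Aᵀ (c k) with hgdef
  set D : ℕ → ℝ := fun k => bregman f f' ustar (u k) with hDdef
  set T : ℕ → ℝ := fun k =>
    ⟪g k, Matrix.toEuclideanLin (B k)⁻¹ (g k)⟫_ℝ
      + L * ‖g k‖ * ‖ustar - u (k + 1)‖ with hTdef
  have hK' : (0 : ℝ) < K := by exact_mod_cast hK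
  -- matrix inverse facts
  have hdet : ∀ k, IsUnit (B k).det := fun k =>
    isUnit_iff_ne_zero.2 (hBpos k).det_pos.ne'
  have hTinv : ∀ k (v : EuclideanSpace ℝ (Fin n)),
      Matrix.toEuclideanLin (B k) (Matrix.toEuclideanLin (B k)⁻¹ v) = v := by
    intro k v
    simp [Matrix.toEuclideanLin_apply, Matrix.mulVec_mulVec,
      Matrix.mul_nonsing_inv _ (hdet k)]
  have hT2 : ∀ k (v : EuclideanSpace ℝ (Fin n)),
      Matrix.toEuclideanLin (B (k + 1)) (Matrix.toEuclideanLin (B k)⁻¹ v)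
        = Matrix.toEuclideanCLM (𝕜 := ℝ) (B (k + 1) * (B k)⁻¹) v := by
    intro k v
    have := Matrix.coe_toEuclideanCLM_eq_toEuclideanLin
      (A := B (k + 1) * (B k)⁻¹) (𝕜 := ℝ)
    have h2 : Matrix.toEuclideanCLM (𝕜 := ℝ) (B (k + 1) * (B k)⁻¹) v
        = Matrix.toEuclideanLin (B (k + 1) * (B k)⁻¹) v := by
      rw [← this]; rfl
    rw [h2]
    simp [Matrix.toEuclideanLin_apply, Matrix.mulVec_mulVec]
  -- adjoint fact
  have hAt : ∀ (w : EuclideanSpace ℝ (Fin m)) (v : EuclideanSpace ℝ (Fin n)),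
      ⟪Matrix.toEuclideanLin Aᵀ w, v⟫_ℝ = ⟪w, Matrix.toEuclideanLin A v⟫_ℝ := by
    intro w v
    have hAA : (Aᴴ : Matrix (Fin n) (Fin m) ℝ) = Aᵀ := by
      ext i j
      simp [Matrix.conjTranspose_apply]
    rw [← hAA, Matrix.toEuclideanLin_conjTranspose_eq_adjoint,
      LinearMap.adjoint_inner_left]
  -- Bregman nonnegativity
  have hbreg_nonneg : ∀ x y, 0 ≤ bregman f f' x y := by
    intro x y
    have := grad_ineq_aux f f' hfconv hf' y x
    simp only [bregman]
    linarith
  -- per-step inequality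
  have key : ∀ k, η * (f (u k) - f ustar) ≤ (D k - D (k + 1)) + η ^ 2 * T k := by
    intro k
    have hdval : u k - u (k + 1) = η • Matrix.toEuclideanLin (B k)⁻¹ (g k) := by
      rw [hupdate k]; abel
    have hBd : Matrix.toEuclideanLin (B k) (u k - u (k + 1)) = η • g k := by
      rw [hdval, map_smul, hTinv]
    have hB1d : Matrix.toEuclideanLin (B (k + 1)) (u k - u (k + 1))
        = f' (u k) - f' (u (k + 1)) := by
      have h2 : u k - u (k + 1) = -(u (k + 1) - u k) := by abel
      rw [h2, map_neg, hsecant k, neg_sub]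
    have hB1d' : Matrix.toEuclideanLin (B (k + 1)) (u k - u (k + 1))
        = η • (Matrix.toEuclideanCLM (𝕜 := ℝ) (B (k + 1) * (B k)⁻¹) (g k)) := by
      rw [hdval, map_smul, hT2]
    set e : EuclideanSpace ℝ (Fin n) :=
      η • g k - (f' (u k) - f' (u (k + 1))) with hedef
    have hee : e = η • (g k - Matrix.toEuclideanCLM (𝕜 := ℝ)
        (B (k + 1) * (B k)⁻¹) (g k)) := by
      rw [hedef, ← hB1d, hB1d', smul_sub]
    have henorm : ‖e‖ ≤ η ^ 2 * L * ‖g k‖ := by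
      rw [hee, norm_smul]
      set X : EuclideanSpace ℝ (Fin n) →L[ℝ] EuclideanSpace ℝ (Fin n) :=
        Matrix.toEuclideanCLM (𝕜 := ℝ) (B (k + 1) * (B k)⁻¹) with hX
      set Y : EuclideanSpace ℝ (Fin n) →L[ℝ] EuclideanSpace ℝ (Fin n) := 1 - X with hY
      have h1 : g k - X (g k) = Y (g k) := by
        rw [hY]
        simp [ContinuousLinearMap.sub_apply]
      have h2 : ‖Y (g k)‖ ≤ ‖Y‖ * ‖g k‖ := ContinuousLinearMap.le_opNorm _ _
      have h3 : ‖Y‖ = ‖X - 1‖ := norm_sub_rev _ _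
      have h4 : ‖X - 1‖ ≤ η * L := hBclose k
      have h5 : ‖g k - X (g k)‖ ≤ η * L * ‖g k‖ := by
        rw [h1]
        calc ‖Y (g k)‖ ≤ ‖Y‖ * ‖g k‖ := h2
          _ = ‖X - 1‖ * ‖g k‖ := by rw [h3]
          _ ≤ η * L * ‖g k‖ := mul_le_mul_of_nonneg_right h4 (norm_nonneg _)
      have h6 : ‖η‖ = η := abs_of_pos hη
      rw [h6]
      nlinarith [norm_nonneg (g k)]
    -- three-point identity
    have hthree : ⟪f' (u k) - f' (u (k + 1)), u (k + 1) - ustar⟫_ℝ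
        = bregman f f' ustar (u k) - bregman f f' ustar (u (k + 1))
          - bregman f f' (u (k + 1)) (u k) := by
      simp only [bregman, inner_sub_left, inner_sub_right]
      ring
    -- convexity + feasibility
    have hcvx := grad_ineq_aux f f' hfconv hf' (u k) ustar
    have hflip : ⟪f' (u k), ustar - u k⟫_ℝ = -⟪f' (u k), u k - ustar⟫_ℝ := by
      have : ustar - u k = -(u k - ustar) := by abel
      rw [this, inner_neg_right]
    have hAzero : ⟪Matrix.toEuclideanLin Aᵀ (c k), u k - ustar⟫_ℝ = 0 := by
      rw [hAt, map_sub, hcon k, hstar_feas, sub_self, inner_zero_right]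
    have hgineq : f (u k) - f ustar ≤ ⟪g k, u k - ustar⟫_ℝ := by
      have : ⟪g k, u k - ustar⟫_ℝ = ⟪f' (u k), u k - ustar⟫_ℝ := by
        rw [hgdef]
        simp only [inner_add_left, hAzero, add_zero]
      rw [this]
      rw [hflip] at hcvx
      linarith
    -- decompose inner product
    have hsplit : ⟪g k, u k - ustar⟫_ℝ
        = ⟪g k, u k - u (k + 1)⟫_ℝ + ⟪g k, u (k + 1) - ustar⟫_ℝ := by
      have h : u k - ustar = (u k - u (k + 1)) + (u (k + 1) - ustar) := by abel
      rw [h, inner_add_right]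
    have hterm1 : ⟪g k, u k - u (k + 1)⟫_ℝ
        = η * ⟪g k, Matrix.toEuclideanLin (B k)⁻¹ (g k)⟫_ℝ := by
      rw [hdval, real_inner_smul_right]
    have hterm2 : η * ⟪g k, u (k + 1) - ustar⟫_ℝ
        = ⟪f' (u k) - f' (u (k + 1)), u (k + 1) - ustar⟫_ℝ
          + ⟪e, u (k + 1) - ustar⟫_ℝ := by
      rw [← inner_add_left, hedef]
      have : f' (u k) - f' (u (k + 1)) + (η • g k - (f' (u k) - f' (u (k + 1))))
          = η • g k := by abel
      rw [this, real_inner_smul_left]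
    have hterm3 : ⟪e, u (k + 1) - ustar⟫_ℝ ≤ η ^ 2 * L * ‖g k‖ * ‖ustar - u (k + 1)‖ := by
      have h1 := real_inner_le_norm e (u (k + 1) - ustar)
      have h2 : ‖u (k + 1) - ustar‖ = ‖ustar - u (k + 1)‖ := norm_sub_rev _ _
      rw [h2] at h1
      calc ⟪e, u (k + 1) - ustar⟫_ℝ ≤ ‖e‖ * ‖ustar - u (k + 1)‖ := h1
        _ ≤ η ^ 2 * L * ‖g k‖ * ‖ustar - u (k + 1)‖ :=
            mul_le_mul_of_nonneg_right henorm (norm_nonneg _)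
    have hD3 := hbreg_nonneg (u (k + 1)) (u k)
    have hmono : η * (f (u k) - f ustar) ≤ η * ⟪g k, u k - ustar⟫_ℝ :=
      mul_le_mul_of_nonneg_left hgineq hη.le
    have hDk : D k = bregman f f' ustar (u k) := rfl
    have hDk1 : D (k + 1) = bregman f f' ustar (u (k + 1)) := rfl
    have hTk : T k = ⟪g k, Matrix.toEuclideanLin (B k)⁻¹ (g k)⟫_ℝ
        + L * ‖g k‖ * ‖ustar - u (k + 1)‖ := rfl
    rw [hthree] at hterm2
    have hchain : η * ⟪g k, u k - ustar⟫_ℝ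
        = η ^ 2 * ⟪g k, Matrix.toEuclideanLin (B k)⁻¹ (g k)⟫_ℝ
          + (bregman f f' ustar (u k) - bregman f f' ustar (u (k + 1))
            - bregman f f' (u (k + 1)) (u k)) + ⟪e, u (k + 1) - ustar⟫_ℝ := by
      rw [hsplit, mul_add, hterm1, hterm2]
      ring
    rw [hDk, hDk1, hTk]
    nlinarith [hmono, hchain, hterm3, hD3]
  -- sum up
  have hsum : η * ((∑ k ∈ Finset.range K, f (u k)) - K * f ustar)
      ≤ D 0 + η ^ 2 * ∑ k ∈ Finset.range K, T k := by
    have h1 : ∀ k ∈ Finset.range K,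
        η * (f (u k) - f ustar) ≤ (D k - D (k + 1)) + η ^ 2 * T k :=
      fun k _ => key k
    have h2 := Finset.sum_le_sum h1
    rw [Finset.sum_add_distrib, Finset.sum_range_sub'] at h2
    have h3 : ∑ k ∈ Finset.range K, η * (f (u k) - f ustar)
        = η * ((∑ k ∈ Finset.range K, f (u k)) - K * f ustar) := by
      rw [← Finset.mul_sum, Finset.sum_sub_distrib, Finset.sum_const,
        Finset.card_range, nsmul_eq_mul]
    have h4 : ∑ k ∈ Finset.range K, η ^ 2 * T k
        = η ^ 2 * ∑ k ∈ Finset.range K, T k := by rw [← Finset.mul_sum]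
    rw [h3, h4] at h2
    have h5 : 0 ≤ D K := hbreg_nonneg ustar (u K)
    linarith
  -- Jensen
  have hjensen : f ((1 / (K : ℝ)) • ∑ k ∈ Finset.range K, u k)
      ≤ (1 / (K : ℝ)) * ∑ k ∈ Finset.range K, f (u k) := by
    have hw0 : ∀ i ∈ Finset.range K, (0 : ℝ) ≤ 1 / (K : ℝ) := by
      intro i _; positivity
    have hw1 : ∑ _i ∈ Finset.range K, (1 / (K : ℝ)) = 1 := by
      rw [Finset.sum_const, Finset.card_range, nsmul_eq_mul]
      field_simp
    have hmem : ∀ i ∈ Finset.range K, u i ∈ (Set.univ : Set (EuclideanSpace ℝ (Fin n))) :=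
      fun i _ => Set.mem_univ _
    have := hfconv.map_sum_le hw0 hw1 hmem
    have heq : ∑ i ∈ Finset.range K, (1 / (K : ℝ)) • u i
        = (1 / (K : ℝ)) • ∑ k ∈ Finset.range K, u k := by
      rw [Finset.smul_sum]
    rw [heq] at this
    calc f ((1 / (K : ℝ)) • ∑ k ∈ Finset.range K, u k)
        ≤ ∑ i ∈ Finset.range K, (1 / (K : ℝ)) * f (u i) := this
      _ = (1 / (K : ℝ)) * ∑ k ∈ Finset.range K, f (u k) := by rw [← Finset.mul_sum]
  -- finish
  set S : ℝ := ∑ k ∈ Finset.range K, T k with hS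
  set F : ℝ := ∑ k ∈ Finset.range K, f (u k) with hF
  have hstep : F - K * f ustar ≤ (D 0 + η ^ 2 * S) / η := by
    rw [le_div_iff₀ hη]
    nlinarith [hsum]
  have hfinal : f ((1 / (K : ℝ)) • ∑ k ∈ Finset.range K, u k) - f ustar
      ≤ (1 / (K : ℝ)) * (F - K * f ustar) := by
    have : (1 / (K : ℝ)) * (F - K * f ustar) = (1 / (K : ℝ)) * F - f ustar := by
      field_simp
    rw [this]
    linarith
  have hrhs : (1 / (K : ℝ)) * ((D 0 + η ^ 2 * S) / η)
      = D 0 / (η * K) + (η / (K : ℝ)) * S := by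
    field_simp
  calc f ((1 / (K : ℝ)) • ∑ k ∈ Finset.range K, u k) - f ustar
      ≤ (1 / (K : ℝ)) * (F - K * f ustar) := hfinal
    _ ≤ (1 / (K : ℝ)) * ((D 0 + η ^ 2 * S) / η) := by
        apply mul_le_mul_of_nonneg_left hstep
        positivity
    _ = D 0 / (η * K) + (η / (K : ℝ)) * S := hrhs
end

section
/- (Sufficient descent for mirror descent) Assume ∇²Φ ⪰ I (so (∇Φ(v) - ∇Φ(u))ᵀ(v-u) ≥ ‖v-u‖²) and ∇f is L-Lipschitz. Let u^{k+1} satisfy ∇Φ(u^{k+1}) - ∇Φ(u^k) = -η(∇f(u^k) + Aᵀc(u^k)) with Au^k = Au^{k+1}. If η ≤ min{1, (2/L)(1-α)} with α ∈ (0, 1/2), then f(u^{k+1}) ≤ f(u^k) + α ∇f(u^k)ᵀ(u^{k+1} - u^k). -/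
set_option maxHeartbeats 1000000

open scoped InnerProductSpace Matrix

theorem mirror_descent_sufficient_descent {n m : ℕ}
    (f Φ : EuclideanSpace ℝ (Fin n) → ℝ)
    (f' Φ' : EuclideanSpace ℝ (Fin n) → EuclideanSpace ℝ (Fin n))
    (A : Matrix (Fin m) (Fin n) ℝ)
    (ck : EuclideanSpace ℝ (Fin m))
    (uk uk1 : EuclideanSpace ℝ (Fin n))
    (η L α : ℝ) (hη : 0 < η) (hL : 0 < L) (hα : α ∈ Set.Ioo (0 : ℝ) (1 / 2))
    (hf' : ∀ x, HasGradientAt f (f' x) x)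
    (hfLip : ∀ x y, ‖f' x - f' y‖ ≤ L * ‖x - y‖)
    (hΦ' : ∀ x, HasGradientAt Φ (Φ' x) x)
    (hΦmono : ∀ x y, ⟪Φ' y - Φ' x, y - x⟫_ℝ ≥ ‖y - x‖ ^ 2)
    (hupdate : Φ' uk1 - Φ' uk = -η • (f' uk + Matrix.toEuclideanLin Aᵀ ck))
    (hcon : Matrix.toEuclideanLin A uk = Matrix.toEuclideanLin A uk1)
    (hstep : η ≤ min 1 (2 / L * (1 - α))) :
    f uk1 ≤ f uk + α * ⟪f' uk, uk1 - uk⟫_ℝ := by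
  set d := uk1 - uk with hd
  -- the constraint term vanishes
  have hA : ⟪(Matrix.toEuclideanLin Aᵀ ck : EuclideanSpace ℝ (Fin n)), d⟫_ℝ = 0 := by
    have hT : (Aᵀ : Matrix (Fin n) (Fin m) ℝ) = A.conjTranspose :=
      (Matrix.conjTranspose_eq_transpose_of_trivial A).symm
    rw [hT, Matrix.toEuclideanLin_conjTranspose_eq_adjoint, LinearMap.adjoint_inner_left]
    rw [hd, map_sub, ← hcon, sub_self, inner_zero_right]
  -- step 1: ⟪f' uk, d⟫ ≤ -(1/η)‖d‖²
  have h1 : ⟪Φ' uk1 - Φ' uk, d⟫_ℝ = -η * ⟪f' uk, d⟫_ℝ := by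
    rw [hupdate, inner_smul_left, inner_add_left, hA]
    simp [RCLike.conj_to_real]
    try ring
  have h2 : ‖d‖ ^ 2 ≤ -η * ⟪f' uk, d⟫_ℝ := h1 ▸ hΦmono uk uk1
  have hinner_nonpos : ⟪f' uk, d⟫_ℝ ≤ 0 := by nlinarith [sq_nonneg ‖d‖]
  -- continuity of f'
  have hf'cont : Continuous f' := by
    refine (LipschitzWith.of_dist_le_mul (K := L.toNNReal) fun x y => ?_).continuous
    rw [dist_eq_norm, dist_eq_norm]
    calc ‖f' x - f' y‖ ≤ L * ‖x - y‖ := hfLip x y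
      _ = L.toNNReal * ‖x - y‖ := by rw [Real.coe_toNNReal L hL.le]
  -- descent lemma via line integral
  set g : ℝ → ℝ := fun t => f (uk + t • d) with hgdef
  have hline : ∀ t : ℝ, HasDerivAt (fun s : ℝ => uk + s • d) d t := fun t => by
    simpa using ((hasDerivAt_id t).smul_const d).const_add uk
  have hg : ∀ t : ℝ, HasDerivAt g ⟪f' (uk + t • d), d⟫_ℝ t := by
    intro t
    have hF := (hf' (uk + t • d)).hasFDerivAt
    have := hF.comp_hasDerivAt t (hline t)
    simp [InnerProductSpace.toDual_apply_apply] at this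
    exact this
  have hmap : Continuous fun t : ℝ => uk + t • d :=
    continuous_const.add (continuous_id.smul continuous_const)
  have hcont : Continuous fun t : ℝ => ⟪f' (uk + t • d), d⟫_ℝ :=
    continuous_inner.comp ((hf'cont.comp hmap).prodMk continuous_const)
  have hint : f uk1 - f uk = ∫ t in (0:ℝ)..1, ⟪f' (uk + t • d), d⟫_ℝ := by
    have := intervalIntegral.integral_eq_sub_of_hasDerivAt
      (f := g) (f' := fun t => ⟪f' (uk + t • d), d⟫_ℝ)
      (fun t _ => hg t) (hcont.intervalIntegrable 0 1)
    rw [this]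
    simp [hgdef, hd]
  have hbound : ∀ t ∈ Set.Icc (0:ℝ) 1,
      ⟪f' (uk + t • d), d⟫_ℝ ≤ ⟪f' uk, d⟫_ℝ + L * ‖d‖ ^ 2 * t := by
    intro t ht
    have : ⟪f' (uk + t • d) - f' uk, d⟫_ℝ ≤ L * ‖d‖ ^ 2 * t := by
      calc ⟪f' (uk + t • d) - f' uk, d⟫_ℝ ≤ ‖f' (uk + t • d) - f' uk‖ * ‖d‖ :=
            real_inner_le_norm _ _
        _ ≤ (L * ‖uk + t • d - uk‖) * ‖d‖ := by
            gcongr; exact hfLip _ _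
        _ = L * ‖d‖ ^ 2 * t := by
            rw [add_sub_cancel_left, norm_smul, Real.norm_eq_abs, abs_of_nonneg ht.1]
            ring
    have e : ⟪f' (uk + t • d) - f' uk, d⟫_ℝ = ⟪f' (uk + t • d), d⟫_ℝ - ⟪f' uk, d⟫_ℝ :=
      inner_sub_left _ _ _
    linarith [e ▸ this]
  have hintle : (∫ t in (0:ℝ)..1, ⟪f' (uk + t • d), d⟫_ℝ)
      ≤ ∫ t in (0:ℝ)..1, (⟪f' uk, d⟫_ℝ + L * ‖d‖ ^ 2 * t) := by
    apply intervalIntegral.integral_mono_on zero_le_one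
      (hcont.intervalIntegrable 0 1) ((continuous_const.add (continuous_const.mul continuous_id')).intervalIntegrable 0 1)
    exact hbound
  have hcalc : (∫ t in (0:ℝ)..1, (⟪f' uk, d⟫_ℝ + L * ‖d‖ ^ 2 * t))
      = ⟪f' uk, d⟫_ℝ + L / 2 * ‖d‖ ^ 2 := by
    rw [intervalIntegral.integral_add (g := fun t => L * ‖d‖ ^ 2 * t) (intervalIntegrable_const)
      ((continuous_const.mul continuous_id').intervalIntegrable 0 1)]
    rw [intervalIntegral.integral_const, intervalIntegral.integral_const_mul,
      integral_id]
    norm_num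
    ring
  have hdesc : f uk1 ≤ f uk + ⟪f' uk, d⟫_ℝ + L / 2 * ‖d‖ ^ 2 := by
    have := hintle.trans_eq hcalc
    linarith [hint]
  -- combine
  have hη2 : L * η / 2 ≤ 1 - α := by
    have h := (le_min_iff.mp hstep).2
    have : η * L ≤ 2 * (1 - α) := by
      have := mul_le_mul_of_nonneg_right h hL.le
      rw [div_mul_eq_mul_div, mul_comm] at this
      calc η * L ≤ 2 / L * (1 - α) * L := by nlinarith
        _ = 2 * (1 - α) := by field_simp
    linarith
  have hdd : L / 2 * ‖d‖ ^ 2 ≤ L / 2 * (-η * ⟪f' uk, d⟫_ℝ) := by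
    apply mul_le_mul_of_nonneg_left h2 (by linarith)
  have : f uk1 ≤ f uk + (1 - L * η / 2) * ⟪f' uk, d⟫_ℝ := by nlinarith
  nlinarith [mul_le_mul_of_nonneg_right (sub_le_sub_left hη2 1)
    (neg_nonneg.mpr hinner_nonpos)]
end

section
/- (Linear convergence of mirror descent with relative strong convexity) Let Φ be 1-strongly convex w.r.t. ‖·‖_ω, let the iterates satisfy ∇Φ(u^{k+1}) = ∇Φ(u^k) - η(∇f(u^k) + Aᵀc(u^k)) with Au^k = Au* = b, and assume D_f(u*, u^k) ≥ μ D_Φ(u*, u^k). If η ≤ 2(f(u^k) - f(u*)) / ‖∇f(u^k)‖_{ω,*}², then D_Φ(u*, u^{k+1}) ≤ (1 - ημ) D_Φ(u*, u^k). -/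
open scoped InnerProductSpace Matrix

lemma norm_fn_equiv {n : ℕ} (w : EuclideanSpace ℝ (Fin n) → ℝ)
    (hw_nonneg : ∀ x, 0 ≤ w x)
    (hw_homog : ∀ (a : ℝ) x, w (a • x) = |a| * w x)
    (hw_tri : ∀ x y, w (x + y) ≤ w x + w y)
    (hw_def : ∀ x, w x = 0 → x = 0) :
    ∃ C : ℝ, 0 < C ∧ ∀ x, ‖x‖ ≤ C * w x := by
  have w0 : w 0 = 0 := by simpa using hw_homog 0 0
  -- coordinate bound
  have hcoord : ∀ (x : EuclideanSpace ℝ (Fin n)) (i : Fin n), |x i| ≤ ‖x‖ := by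
    intro x i
    rw [EuclideanSpace.norm_eq]
    have : |x i| = Real.sqrt (‖x i‖ ^ 2) := by
      rw [Real.sqrt_sq_eq_abs]; simp
    rw [this]
    apply Real.sqrt_le_sqrt
    exact Finset.single_le_sum (f := fun j => ‖x j‖ ^ 2) (fun j _ => by positivity)
      (Finset.mem_univ i)
  -- sum triangle inequality
  have w_sum : ∀ (s : Finset (Fin n)) (v : Fin n → EuclideanSpace ℝ (Fin n)),
      w (∑ i ∈ s, v i) ≤ ∑ i ∈ s, w (v i) := by
    intro s v
    classical
    induction s using Finset.induction_on with
    | empty => simp [w0]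
    | insert a s' hx ih =>
      rw [Finset.sum_insert hx, Finset.sum_insert hx]
      exact le_trans (hw_tri _ _) (by linarith)
  -- upper bound w ≤ K ‖·‖
  set K : ℝ := ∑ i : Fin n, w (EuclideanSpace.single i 1) with hK
  have hK0 : 0 ≤ K := Finset.sum_nonneg fun i _ => hw_nonneg _
  have hupper : ∀ x, w x ≤ K * ‖x‖ := by
    intro x
    have hx : ∑ i : Fin n, x i • EuclideanSpace.single i (1:ℝ) = x := by
      have := (EuclideanSpace.basisFun (Fin n) ℝ).sum_repr x
      simpa [EuclideanSpace.basisFun_apply, EuclideanSpace.basisFun_repr] using this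
    calc w x = w (∑ i : Fin n, x i • EuclideanSpace.single i (1:ℝ)) := by rw [hx]
      _ ≤ ∑ i : Fin n, w (x i • EuclideanSpace.single i (1:ℝ)) := w_sum _ _
      _ = ∑ i : Fin n, |x i| * w (EuclideanSpace.single i (1:ℝ)) := by
          simp [hw_homog]
      _ ≤ ∑ i : Fin n, ‖x‖ * w (EuclideanSpace.single i (1:ℝ)) :=
          Finset.sum_le_sum fun i _ =>
            mul_le_mul_of_nonneg_right (hcoord x i) (hw_nonneg _)
      _ = K * ‖x‖ := by rw [← Finset.mul_sum, hK]; ring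
  -- continuity of w
  have wneg : ∀ x, w (-x) = w x := by
    intro x; simpa using hw_homog (-1) x
  have hlip : ∀ x y, |w x - w y| ≤ K * ‖x - y‖ := by
    intro x y
    have h1 : w x ≤ w (x - y) + w y := by
      have := hw_tri (x - y) y; simpa using this
    have h2 : w y ≤ w x + w (x - y) := by
      have := hw_tri (y - x) x
      have h' : w (y - x) = w (x - y) := by
        rw [show y - x = -(x - y) by abel, wneg]
      simp [h'] at this; linarith
    have := hupper (x - y)
    rw [abs_le]; constructor <;> linarith
  have hwcont : Continuous w := by
    apply Metric.continuous_iff.2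
    intro x ε hε
    rcases eq_or_lt_of_le hK0 with hK' | hK'
    · exact ⟨1, one_pos, fun y _ => by
        have := hlip y x; rw [Real.dist_eq]
        calc |w y - w x| ≤ K * ‖y - x‖ := hlip y x
          _ = 0 := by rw [← hK']; ring
          _ < ε := hε⟩
    · refine ⟨ε / K, by positivity, fun y hy => ?_⟩
      rw [Real.dist_eq]
      calc |w y - w x| ≤ K * ‖y - x‖ := hlip y x
        _ = K * dist y x := by rw [dist_eq_norm]
        _ < K * (ε / K) := by exact mul_lt_mul_of_pos_left hy hK'
        _ = ε := by field_simp
  rcases subsingleton_or_nontrivial (EuclideanSpace ℝ (Fin n)) with hs | hs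
  · exact ⟨1, one_pos, fun x => by
      rw [Subsingleton.elim x 0]; simp [w0]⟩
  · -- min on sphere
    have hsph : (Metric.sphere (0 : EuclideanSpace ℝ (Fin n)) 1).Nonempty :=
      NormedSpace.sphere_nonempty.2 zero_le_one
    obtain ⟨z, hz, hzmin⟩ := (isCompact_sphere (0 : EuclideanSpace ℝ (Fin n)) 1).exists_isMinOn
      hsph hwcont.continuousOn
    have hz1 : ‖z‖ = 1 := by simpa using hz
    have hzne : z ≠ 0 := by intro h; rw [h] at hz1; simp at hz1
    have hc : 0 < w z := by
      rcases (hw_nonneg z).lt_or_eq with h | h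
      · exact h
      · exact absurd (hw_def z h.symm) hzne
    refine ⟨(w z)⁻¹, by positivity, fun x => ?_⟩
    rcases eq_or_ne x 0 with rfl | hx
    · simp [w0]
    · have hxn : (0:ℝ) < ‖x‖ := norm_pos_iff.2 hx
      have hmem : (‖x‖⁻¹ • x) ∈ Metric.sphere (0 : EuclideanSpace ℝ (Fin n)) 1 := by
        simp [norm_smul, abs_of_pos (inv_pos.2 hxn), inv_mul_cancel₀ hxn.ne']
      have hws : w (‖x‖⁻¹ • x) = ‖x‖⁻¹ * w x := by
        rw [hw_homog, abs_of_pos (inv_pos.2 hxn)]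
      have hle : w z ≤ ‖x‖⁻¹ * w x := by
        have h : w z ≤ w (‖x‖⁻¹ • x) := hzmin hmem
        rw [hws] at h; exact h
      have key : w z * ‖x‖ ≤ w x := by
        have h2 := mul_le_mul_of_nonneg_right hle hxn.le
        calc w z * ‖x‖ ≤ ‖x‖⁻¹ * w x * ‖x‖ := h2
          _ = w x := by field_simp
      calc ‖x‖ = (w z)⁻¹ * (w z * ‖x‖) := by field_simp
        _ ≤ (w z)⁻¹ * w x := mul_le_mul_of_nonneg_left key (by positivity)

lemma dual_cs {n : ℕ} (w ws : EuclideanSpace ℝ (Fin n) → ℝ)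
    (hw_nonneg : ∀ x, 0 ≤ w x)
    (hw_homog : ∀ (a : ℝ) x, w (a • x) = |a| * w x)
    (hw_tri : ∀ x y, w (x + y) ≤ w x + w y)
    (hw_def : ∀ x, w x = 0 → x = 0)
    (hdual : ∀ g, ws g = sSup {r : ℝ | ∃ x, w x ≤ 1 ∧ r = ⟪g, x⟫_ℝ}) :
    ∀ g x, ⟪g, x⟫_ℝ ≤ ws g * w x ∧ 0 ≤ ws g := by
  obtain ⟨C, hC, hCle⟩ := norm_fn_equiv w hw_nonneg hw_homog hw_tri hw_def
  have w0 : w 0 = 0 := by simpa using hw_homog 0 0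
  intro g x
  set S : Set ℝ := {r : ℝ | ∃ x, w x ≤ 1 ∧ r = ⟪g, x⟫_ℝ} with hS
  have hmem0 : (0:ℝ) ∈ S := ⟨0, by simp [w0], by simp⟩
  have hbdd : BddAbove S := by
    refine ⟨‖g‖ * C, fun r hr => ?_⟩
    obtain ⟨y, hy, rfl⟩ := hr
    calc ⟪g, y⟫_ℝ ≤ ‖g‖ * ‖y‖ := real_inner_le_norm g y
      _ ≤ ‖g‖ * (C * w y) := by
          exact mul_le_mul_of_nonneg_left (hCle y) (norm_nonneg g)
      _ ≤ ‖g‖ * (C * 1) := by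
          apply mul_le_mul_of_nonneg_left _ (norm_nonneg g)
          exact mul_le_mul_of_nonneg_left hy hC.le
      _ = ‖g‖ * C := by ring
  have hws0 : 0 ≤ ws g := by rw [hdual g]; exact le_csSup hbdd hmem0
  refine ⟨?_, hws0⟩
  rcases (hw_nonneg x).eq_or_lt with h | h
  · have hx0 : x = 0 := hw_def x h.symm
    rw [hx0, inner_zero_right, w0, mul_zero]
  · have hmem : ⟪g, (w x)⁻¹ • x⟫_ℝ ∈ S := by
      refine ⟨(w x)⁻¹ • x, ?_, rfl⟩
      rw [hw_homog, abs_of_pos (inv_pos.2 h), inv_mul_cancel₀ h.ne']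
    have hle : ⟪g, (w x)⁻¹ • x⟫_ℝ ≤ ws g := by
      rw [hdual g]; exact le_csSup hbdd hmem
    rw [real_inner_smul_right] at hle
    have := mul_le_mul_of_nonneg_right hle (hw_nonneg x)
    calc ⟪g, x⟫_ℝ = (w x)⁻¹ * ⟪g, x⟫_ℝ * w x := by field_simp
      _ ≤ ws g * w x := this

theorem mirror_descent_linear_convergence_step {n m : ℕ}
    (f Φ : EuclideanSpace ℝ (Fin n) → ℝ)
    (f' Φ' : EuclideanSpace ℝ (Fin n) → EuclideanSpace ℝ (Fin n))
    (w ws : EuclideanSpace ℝ (Fin n) → ℝ)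
    (hw_nonneg : ∀ x, 0 ≤ w x)
    (hw_homog : ∀ (a : ℝ) x, w (a • x) = |a| * w x)
    (hw_tri : ∀ x y, w (x + y) ≤ w x + w y)
    (hw_def : ∀ x, w x = 0 → x = 0)
    (hdual : ∀ g, ws g = sSup {r : ℝ | ∃ x, w x ≤ 1 ∧ r = ⟪g, x⟫_ℝ})
    (A : Matrix (Fin m) (Fin n) ℝ) (b : EuclideanSpace ℝ (Fin m))
    (ck : EuclideanSpace ℝ (Fin m))
    (uk uk1 ustar : EuclideanSpace ℝ (Fin n))
    (η μ : ℝ) (hη : 0 < η) (hμ : 0 < μ)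
    (hfconv : ConvexOn ℝ Set.univ f)
    (hf' : ∀ x, HasGradientAt f (f' x) x)
    (hΦ' : ∀ x, HasGradientAt Φ (Φ' x) x)
    (hsc : ∀ x y, bregman Φ Φ' x y ≥ w (x - y) ^ 2 / 2)
    (hupdate : Φ' uk1 = Φ' uk - η • (f' uk + Matrix.toEuclideanLin Aᵀ ck))
    (hk : Matrix.toEuclideanLin A uk = b)
    (hk1 : Matrix.toEuclideanLin A uk1 = b)
    (hstar_feas : Matrix.toEuclideanLin A ustar = b)
    (hstar_min : ∀ v, Matrix.toEuclideanLin A v = b → f ustar ≤ f v)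
    (hrel : bregman f f' ustar uk ≥ μ * bregman Φ Φ' ustar uk)
    (hstep : η ≤ 2 * (f uk - f ustar) / ws (f' uk) ^ 2) :
    bregman Φ Φ' ustar uk1 ≤ (1 - η * μ) * bregman Φ Φ' ustar uk := by
  -- three-point identity
  have hident : bregman Φ Φ' ustar uk1 = bregman Φ Φ' ustar uk - bregman Φ Φ' uk1 uk
      + η * (⟪f' uk, ustar - uk⟫_ℝ + ⟪f' uk, uk - uk1⟫_ℝ
        + ⟪(Matrix.toEuclideanLin Aᵀ) ck, ustar - uk1⟫_ℝ) := by
    simp only [bregman, hupdate, inner_sub_left, inner_add_left, real_inner_smul_left,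
      inner_sub_right]
    ring
  -- multiplier term vanishes
  have hA0 : ⟪(Matrix.toEuclideanLin Aᵀ) ck, ustar - uk1⟫_ℝ = 0 := by
    have ht : (Aᵀ) = Aᴴ := (Matrix.conjTranspose_eq_transpose_of_trivial A).symm
    rw [ht, Matrix.toEuclideanLin_conjTranspose_eq_adjoint, LinearMap.adjoint_inner_left,
      map_sub, hstar_feas, hk1, sub_self, inner_zero_right]
  -- Bregman of f
  have hbf : bregman f f' ustar uk = f ustar - f uk - ⟪f' uk, ustar - uk⟫_ℝ := rfl
  -- Cauchy-Schwarz with dual norm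
  obtain ⟨hcs, hws0⟩ := dual_cs w ws hw_nonneg hw_homog hw_tri hw_def hdual (f' uk) (uk - uk1)
  have hwn : 0 ≤ w (uk - uk1) := hw_nonneg _
  -- strong convexity term
  have hsck : bregman Φ Φ' uk1 uk ≥ w (uk - uk1) ^ 2 / 2 := by
    have h := hsc uk1 uk
    have : w (uk1 - uk) = w (uk - uk1) := by
      have h' := hw_homog (-1) (uk - uk1)
      rw [show (-1:ℝ) • (uk - uk1) = uk1 - uk by module] at h'
      simpa using h'
    rwa [this] at h
  -- step size condition
  have hηws : η * ws (f' uk) ^ 2 ≤ 2 * (f uk - f ustar) := by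
    rcases eq_or_ne (ws (f' uk) ^ 2) 0 with h | h
    · rw [h, mul_zero]; linarith [hstar_min uk hk]
    · have hpos : 0 < ws (f' uk) ^ 2 := lt_of_le_of_ne (sq_nonneg _) (Ne.symm h)
      exact (le_div_iff₀ hpos).mp hstep
  have h1 : η * (μ * bregman Φ Φ' ustar uk) ≤ η * bregman f f' ustar uk :=
    mul_le_mul_of_nonneg_left hrel hη.le
  have h2 : η * ⟪f' uk, uk - uk1⟫_ℝ ≤ η * (ws (f' uk) * w (uk - uk1)) :=
    mul_le_mul_of_nonneg_left hcs hη.le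
  have h3 : η * (ws (f' uk) * w (uk - uk1)) ≤ (η * ws (f' uk)) ^ 2 / 2 + w (uk - uk1) ^ 2 / 2 := by
    nlinarith [sq_nonneg (η * ws (f' uk) - w (uk - uk1))]
  have h4 : (η * ws (f' uk)) ^ 2 / 2 ≤ η * (f uk - f ustar) := by
    have := mul_le_mul_of_nonneg_left hηws (by positivity : (0:ℝ) ≤ η / 2)
    nlinarith
  rw [hident, hA0, hbf] at *
  linarith
end
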